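/- arXiv:2509.07179 — 10 statements merged into one kernel-verified Lean document; each statement's English description precedes it below -/
import Mathlib

section
/- Let V and W be finite-dimensional real inner product spaces, Π : W → V a surjective linear map, B̃ : W → W symmetric positive definite, and B = Π B̃ Πᵗ. Then for every v ∈ V, ⟨B⁻¹v, v⟩ = inf { ⟨B̃⁻¹w, w⟩ : w ∈ W, Πw = v }, and the infimum is attained at w = B̃ Πᵗ B⁻¹ v. -/
open scoped RealInnerProductSpace

theorem stmt_1
    {V W : Type*} [NormedAddCommGroup V] [InnerProductSpace ℝ V] [FiniteDimensional ℝ V]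
    [NormedAddCommGroup W] [InnerProductSpace ℝ W] [FiniteDimensional ℝ W]
    (P : W →ₗ[ℝ] V) (hP : Function.Surjective P)
    (Bt : W →ₗ[ℝ] W) (hBtsym : Bt.IsSymmetric)
    (hBtpos : ∀ w : W, w ≠ 0 → 0 < ⟪Bt w, w⟫)
    (Btinv : W →ₗ[ℝ] W) (hBt1 : Bt ∘ₗ Btinv = LinearMap.id) (hBt2 : Btinv ∘ₗ Bt = LinearMap.id)
    (B Binv : V →ₗ[ℝ] V) (hB : B = P ∘ₗ Bt ∘ₗ LinearMap.adjoint P)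
    (hB1 : B ∘ₗ Binv = LinearMap.id) (hB2 : Binv ∘ₗ B = LinearMap.id)
    (v : V) :
    ⟪Binv v, v⟫ = sInf {x : ℝ | ∃ w : W, P w = v ∧ x = ⟪Btinv w, w⟫} ∧
    P (Bt (LinearMap.adjoint P (Binv v))) = v ∧
    ⟪Btinv (Bt (LinearMap.adjoint P (Binv v))), Bt (LinearMap.adjoint P (Binv v))⟫ = ⟪Binv v, v⟫ := by
  set w₀ : W := Bt (LinearMap.adjoint P (Binv v)) with hw₀
  have hBtinv_w₀ : Btinv w₀ = LinearMap.adjoint P (Binv v) :=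
    LinearMap.congr_fun hBt2 _
  have hPw₀ : P w₀ = v := by
    have := LinearMap.congr_fun hB1 v
    rw [hB] at this
    simpa using this
  have hval : ⟪Btinv w₀, w₀⟫ = ⟪Binv v, v⟫ := by
    rw [hBtinv_w₀, hw₀, LinearMap.adjoint_inner_left]
    have := LinearMap.congr_fun hB1 v
    rw [hB] at this
    simp only [LinearMap.comp_apply, LinearMap.id_apply] at this
    rw [this]
  -- nonnegativity of Bt quadratic form
  have hBtnonneg : ∀ w : W, 0 ≤ ⟪Bt w, w⟫ := by
    intro w
    by_cases h : w = 0
    · simp [h]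
    · exact (hBtpos w h).le
  -- Btinv quadratic form nonneg
  have hBtinvnonneg : ∀ w : W, 0 ≤ ⟪Btinv w, w⟫ := by
    intro w
    have : w = Bt (Btinv w) := (LinearMap.congr_fun hBt1 w).symm
    calc 0 ≤ ⟪Bt (Btinv w), Btinv w⟫ := hBtnonneg _
    _ = ⟪Btinv w, Bt (Btinv w)⟫ := real_inner_comm _ _
    _ = ⟪Btinv w, w⟫ := by rw [← this]
  have hlb : ∀ x ∈ {x : ℝ | ∃ w : W, P w = v ∧ x = ⟪Btinv w, w⟫}, ⟪Binv v, v⟫ ≤ x := by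
    rintro x ⟨w, hw, rfl⟩
    have hu : w = w₀ + (w - w₀) := by abel
    have hPu : P (w - w₀) = 0 := by rw [map_sub, hw, hPw₀, sub_self]
    have hcross : ⟪Btinv w₀, w - w₀⟫ = 0 := by
      rw [hBtinv_w₀, LinearMap.adjoint_inner_left, hPu, inner_zero_right]
    have hcross' : ⟪Btinv (w - w₀), w₀⟫ = 0 := by
      have h1 : w₀ = Bt (Btinv w₀) := (LinearMap.congr_fun hBt1 w₀).symm
      calc ⟪Btinv (w - w₀), w₀⟫ = ⟪Btinv (w - w₀), Bt (Btinv w₀)⟫ := by rw [← h1]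
      _ = ⟪Bt (Btinv (w - w₀)), Btinv w₀⟫ := (hBtsym _ _).symm
      _ = ⟪w - w₀, Btinv w₀⟫ := by
          have h2 : Bt (Btinv (w - w₀)) = w - w₀ := LinearMap.congr_fun hBt1 _
          rw [h2]
      _ = ⟪Btinv w₀, w - w₀⟫ := real_inner_comm _ _
      _ = 0 := hcross
    have expand : ⟪Btinv w, w⟫ = ⟪Btinv w₀, w₀⟫ + ⟪Btinv (w - w₀), w - w₀⟫ := by
      conv_lhs => rw [hu]
      rw [map_add, inner_add_left, inner_add_right, inner_add_right, hcross, hcross']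
      ring
    rw [expand, hval]
    linarith [hBtinvnonneg (w - w₀)]
  have hmem : ⟪Binv v, v⟫ ∈ {x : ℝ | ∃ w : W, P w = v ∧ x = ⟪Btinv w, w⟫} :=
    ⟨w₀, hPw₀, hval.symm⟩
  refine ⟨(IsLeast.csInf_eq ⟨hmem, hlb⟩).symm, hPw₀, hval⟩
end

section
/- Let V be a finite-dimensional real inner product space, A : V → V symmetric positive definite, and B : V → V linear with B̄ = B + Bᵗ − Bᵗ A B symmetric positive definite. Then B is invertible. -/
open scoped RealInnerProductSpace

theorem stmt_4
    {V : Type*} [NormedAddCommGroup V] [InnerProductSpace ℝ V] [FiniteDimensional ℝ V]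
    (A : V →ₗ[ℝ] V) (hAsym : A.IsSymmetric) (hApos : ∀ v : V, v ≠ 0 → 0 < ⟪A v, v⟫)
    (B : V →ₗ[ℝ] V)
    (Bbar : V →ₗ[ℝ] V) (hBbar : Bbar = B + LinearMap.adjoint B - LinearMap.adjoint B ∘ₗ A ∘ₗ B)
    (hBbarSym : Bbar.IsSymmetric) (hBbarPos : ∀ v : V, v ≠ 0 → 0 < ⟪Bbar v, v⟫) :
    Function.Bijective B := by
  have hinj : Function.Injective B := by
    rw [← LinearMap.ker_eq_bot, LinearMap.ker_eq_bot']
    intro v hv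
    by_contra hne
    have hpos := hBbarPos v hne
    have : Bbar v = LinearMap.adjoint B v := by
      simp [hBbar, hv]
    rw [this, LinearMap.adjoint_inner_left, hv, inner_zero_right] at hpos
    exact lt_irrefl 0 hpos
  exact ⟨hinj, (LinearMap.injective_iff_surjective).mp hinj⟩
end

section
/- Let V be a finite-dimensional real inner product space and let A, B : V → V both be symmetric positive definite. Then the smallest eigenvalue of BA satisfies λ_min(BA) = ( sup_{v ∈ V, ‖v‖_A = 1} ⟨B⁻¹v, v⟩ )⁻¹ and the largest eigenvalue satisfies λ_max(BA) = ( inf_{v ∈ V, ‖v‖_A = 1} ⟨B⁻¹v, v⟩ )⁻¹. -/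
/-!
`T := A⁻¹ B⁻¹ = (BA)⁻¹` is symmetric for the energy inner product `⟪A u, v⟫`, and its Rayleigh
quotient there is `⟪A (T v), v⟫ = ⟪B⁻¹ v, v⟫`. In finite dimension the maximum and the minimum of
the Rayleigh quotient of a symmetric operator on the unit sphere are attained at eigenvectors, so
they are the largest and the smallest eigenvalue of `T`. These are positive, and inverting them
gives the smallest and the largest eigenvalue of `BA`.
-/

open scoped RealInnerProductSpace

variable {V : Type*} [NormedAddCommGroup V] [InnerProductSpace ℝ V] [FiniteDimensional ℝ V]

/-- The norm induced by a (positive) symmetric operator `A`. -/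
noncomputable def normA (A : V →ₗ[ℝ] V) (v : V) : ℝ := Real.sqrt ⟪A v, v⟫

open Module.End

theorem IsGreatest.isLeast_image_inv {α : Type*} [Field α] [LinearOrder α]
    [IsStrictOrderedRing α] {S : Set α} {a : α} (ha : IsGreatest S a) (hS : ∀ x ∈ S, 0 < x) :
    IsLeast ((·⁻¹) '' S) a⁻¹ := by
  refine ⟨⟨a, ha.1, rfl⟩, ?_⟩
  rintro _ ⟨x, hx, rfl⟩
  exact inv_anti₀ (hS x hx) (ha.2 hx)

theorem IsLeast.isGreatest_image_inv {α : Type*} [Field α] [LinearOrder α]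
    [IsStrictOrderedRing α] {S : Set α} {a : α} (ha : IsLeast S a) (hS : ∀ x ∈ S, 0 < x) :
    IsGreatest ((·⁻¹) '' S) a⁻¹ := by
  refine ⟨⟨a, ha.1, rfl⟩, ?_⟩
  rintro _ ⟨x, hx, rfl⟩
  exact inv_anti₀ (hS a ha.1) (ha.2 hx)

section Inverse

variable {K M : Type*} [Field K] [AddCommGroup M] [Module K M] {f g : Module.End K M}

theorem Module.End.HasEigenvalue.inv_of_comp_eq_id (hgf : g ∘ₗ f = LinearMap.id) {μ : K}
    (hμ : HasEigenvalue f μ) : HasEigenvalue g μ⁻¹ := by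
  obtain ⟨v, hv⟩ := hμ.exists_hasEigenvector
  have hgf' : ∀ x, g (f x) = x := LinearMap.congr_fun hgf
  have hμ0 : μ ≠ 0 := by
    rintro rfl
    apply hv.2
    rw [← hgf' v, hv.apply_eq_smul, zero_smul, map_zero]
  refine hasEigenvalue_of_hasEigenvector ⟨mem_eigenspace_iff.2 ?_, hv.2⟩
  conv_rhs => rw [← hgf' v, hv.apply_eq_smul, map_smul, inv_smul_smul₀ hμ0]

theorem Module.End.setOf_hasEigenvalue_eq_image_inv (hgf : g ∘ₗ f = LinearMap.id)
    (hfg : f ∘ₗ g = LinearMap.id) :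
    {μ | HasEigenvalue f μ} = (·⁻¹) '' {μ | HasEigenvalue g μ} := by
  ext μ
  refine ⟨fun hμ => ⟨μ⁻¹, hμ.inv_of_comp_eq_id hgf, inv_inv μ⟩, ?_⟩
  rintro ⟨ν, hν, rfl⟩
  exact hν.inv_of_comp_eq_id hfg

theorem Module.End.setOf_hasEigenvalue_comp_eq_image_inv {A B Binv T : Module.End K M}
    (hA : Function.Injective A) (h1 : B ∘ₗ Binv = LinearMap.id) (h2 : Binv ∘ₗ B = LinearMap.id)
    (hAT : A ∘ₗ T = Binv) :
    {μ | HasEigenvalue (B ∘ₗ A) μ} = (·⁻¹) '' {μ | HasEigenvalue T μ} := by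
  have hAT' (x : M) : A (T x) = Binv x := LinearMap.congr_fun hAT x
  refine setOf_hasEigenvalue_eq_image_inv (LinearMap.ext fun x => hA ?_)
    (LinearMap.ext fun x => ?_)
  · change A (T (B (A x))) = A x
    rw [hAT', ← LinearMap.comp_apply Binv, h2, LinearMap.id_apply]
  · change B (A (T x)) = x
    rw [hAT', ← LinearMap.comp_apply B, h1, LinearMap.id_apply]

theorem Module.End.setOf_hasEigenvalue_eq_empty [Subsingleton M] (f : Module.End K M) :
    {μ | HasEigenvalue f μ} = ∅ :=
  Set.eq_empty_of_forall_notMem fun _ hμ =>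
    hμ.exists_hasEigenvector.choose_spec.2 (Subsingleton.elim _ _)

theorem LinearMap.exists_comp_eq_of_injective [FiniteDimensional K M] {A : Module.End K M}
    (hA : Function.Injective A) (C : Module.End K M) : ∃ T, A ∘ₗ T = C :=
  ⟨(LinearEquiv.ofInjectiveEndo A hA).symm.toLinearMap ∘ₗ C,
    LinearMap.ext fun x => (LinearEquiv.ofInjectiveEndo A hA).apply_symm_apply (C x)⟩

end Inverse

section InnerProductSpace

variable {E : Type*} [NormedAddCommGroup E] [InnerProductSpace ℝ E] {T : E →ₗ[ℝ] E}

theorem Module.End.HasEigenvalue.exists_norm_eq_one_inner {μ : ℝ} (hμ : HasEigenvalue T μ) :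
    ∃ v : E, ‖v‖ = 1 ∧ μ = ⟪T v, v⟫ := by
  obtain ⟨v, hv⟩ := hμ.exists_hasEigenvector
  have hv0 : ‖v‖ ≠ 0 := norm_ne_zero_iff.2 hv.2
  refine ⟨‖v‖⁻¹ • v, norm_smul_inv_norm hv.2, ?_⟩
  rw [map_smul, hv.apply_eq_smul, real_inner_smul_left, real_inner_smul_right,
    real_inner_smul_left, real_inner_self_eq_norm_sq]
  field_simp

theorem LinearMap.injective_of_inner_self_pos {A : E →ₗ[ℝ] E}
    (hApos : ∀ v : E, v ≠ 0 → 0 < ⟪A v, v⟫) : Function.Injective A := by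
  refine (injective_iff_map_eq_zero A).2 fun v hv => ?_
  by_contra h
  simpa [hv] using hApos v h

@[reducible]
noncomputable def LinearMap.innerCore (A : E →ₗ[ℝ] E) (hAsym : A.IsSymmetric)
    (hApos : ∀ v : E, v ≠ 0 → 0 < ⟪A v, v⟫) : InnerProductSpace.Core ℝ E where
  inner u v := ⟪A u, v⟫
  conj_inner_symm u v := by
    simp only [conj_trivial]
    rw [hAsym, real_inner_comm]
  re_inner_nonneg v := by
    rcases eq_or_ne v 0 with rfl | hv
    · simp
    · exact (hApos v hv).le
  add_left u v w := by simp only [map_add, inner_add_left]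
  smul_left u v r := by simp only [map_smul, real_inner_smul_left, conj_trivial]
  definite v hv := by
    by_contra h
    exact (hApos v h).ne' hv

theorem LinearMap.IsSymmetric.of_comp_eq_id {B Binv : E →ₗ[ℝ] E} (hB : B.IsSymmetric)
    (h : B ∘ₗ Binv = LinearMap.id) : Binv.IsSymmetric := fun x y => by
  have hBBinv : ∀ z, B (Binv z) = z := LinearMap.congr_fun h
  calc ⟪Binv x, y⟫ = ⟪Binv x, B (Binv y)⟫ := by rw [hBBinv]
    _ = ⟪x, Binv y⟫ := by rw [← hB, hBBinv]

theorem inner_self_pos_of_comp_eq_id {B Binv : E →ₗ[ℝ] E}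
    (hBpos : ∀ v : E, v ≠ 0 → 0 < ⟪B v, v⟫) (h : B ∘ₗ Binv = LinearMap.id) {v : E} (hv : v ≠ 0) :
    0 < ⟪Binv v, v⟫ := by
  have hBBinv : B (Binv v) = v := LinearMap.congr_fun h v
  have hBinv : Binv v ≠ 0 := fun h0 => hv (by rw [← hBBinv, h0, map_zero])
  simpa [hBBinv, real_inner_comm] using hBpos _ hBinv

variable [FiniteDimensional ℝ E] [Nontrivial E]

theorem LinearMap.IsSymmetric.exists_isGreatest_hasEigenvalue (hT : T.IsSymmetric) :
    ∃ M, IsGreatest {μ | HasEigenvalue T μ} M ∧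
      IsGreatest {x | ∃ v : E, ‖v‖ = 1 ∧ x = ⟪T v, v⟫} M := by
  have := FiniteDimensional.proper_rclike ℝ E
  obtain ⟨v, hv, hmax⟩ := (isCompact_sphere (0 : E) 1).exists_isMaxOn
    (NormedSpace.sphere_nonempty.2 zero_le_one)
    (T.continuous_of_finiteDimensional.inner (𝕜 := ℝ) continuous_id).continuousOn
  have hv1 : ‖v‖ = 1 := by simpa using hv
  have hv0 : v ≠ 0 := norm_ne_zero_iff.1 (by simp [hv1])
  obtain ⟨μ, hev⟩ : ∃ μ, HasEigenvector T μ v :=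
    ⟨_, hT.toSelfAdjoint.prop.hasEigenvector_of_isMaxOn hv0 (by rw [hv1]; exact hmax)⟩
  have hμ : ⟪T v, v⟫ = μ := by
    rw [hev.apply_eq_smul, real_inner_smul_left, real_inner_self_eq_norm_sq, hv1, one_pow, mul_one]
  have hbound : ∀ w : E, ‖w‖ = 1 → ⟪T w, w⟫ ≤ μ := fun w hw =>
    hμ ▸ hmax (a := w) (by simp [hw])
  refine ⟨μ, ⟨hasEigenvalue_of_hasEigenvector hev, fun ν hν => ?_⟩, ⟨v, hv1, hμ.symm⟩, ?_⟩
  · obtain ⟨w, hw, rfl⟩ := hν.exists_norm_eq_one_inner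
    exact hbound w hw
  · rintro _ ⟨w, hw, rfl⟩
    exact hbound w hw

theorem LinearMap.IsSymmetric.exists_isLeast_hasEigenvalue (hT : T.IsSymmetric) :
    ∃ M, IsLeast {μ | HasEigenvalue T μ} M ∧
      IsLeast {x | ∃ v : E, ‖v‖ = 1 ∧ x = ⟪T v, v⟫} M := by
  have := FiniteDimensional.proper_rclike ℝ E
  obtain ⟨v, hv, hmin⟩ := (isCompact_sphere (0 : E) 1).exists_isMinOn
    (NormedSpace.sphere_nonempty.2 zero_le_one)
    (T.continuous_of_finiteDimensional.inner (𝕜 := ℝ) continuous_id).continuousOn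
  have hv1 : ‖v‖ = 1 := by simpa using hv
  have hv0 : v ≠ 0 := norm_ne_zero_iff.1 (by simp [hv1])
  obtain ⟨μ, hev⟩ : ∃ μ, HasEigenvector T μ v :=
    ⟨_, hT.toSelfAdjoint.prop.hasEigenvector_of_isMinOn hv0 (by rw [hv1]; exact hmin)⟩
  have hμ : ⟪T v, v⟫ = μ := by
    rw [hev.apply_eq_smul, real_inner_smul_left, real_inner_self_eq_norm_sq, hv1, one_pow, mul_one]
  have hbound : ∀ w : E, ‖w‖ = 1 → μ ≤ ⟪T w, w⟫ := fun w hw =>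
    hμ ▸ hmin (a := w) (by simp [hw])
  refine ⟨μ, ⟨hasEigenvalue_of_hasEigenvector hev, fun ν hν => ?_⟩, ⟨v, hv1, hμ.symm⟩, ?_⟩
  · obtain ⟨w, hw, rfl⟩ := hν.exists_norm_eq_one_inner
    exact hbound w hw
  · rintro _ ⟨w, hw, rfl⟩
    exact hbound w hw

end InnerProductSpace

theorem exists_isGreatest_hasEigenvalue_normA_sphere [Nontrivial V] {A : V →ₗ[ℝ] V}
    (hAsym : A.IsSymmetric) (hApos : ∀ v : V, v ≠ 0 → 0 < ⟪A v, v⟫) {T : V →ₗ[ℝ] V}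
    (hT : ∀ x y, ⟪A (T x), y⟫ = ⟪A x, T y⟫) :
    ∃ M, IsGreatest {μ | HasEigenvalue T μ} M ∧
      IsGreatest {x | ∃ v : V, normA A v = 1 ∧ x = ⟪A (T v), v⟫} M := by
  let c := A.innerCore hAsym hApos
  -- In the inner product space `(V, c)`, `hT` is symmetry and the norm is `normA A`, by `rfl`.
  exact @LinearMap.IsSymmetric.exists_isGreatest_hasEigenvalue V c.toNormedAddCommGroup
    (InnerProductSpace.ofCore c.toCore) T (inferInstanceAs (FiniteDimensional ℝ V)) _ hT

theorem exists_isLeast_hasEigenvalue_normA_sphere [Nontrivial V] {A : V →ₗ[ℝ] V}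
    (hAsym : A.IsSymmetric) (hApos : ∀ v : V, v ≠ 0 → 0 < ⟪A v, v⟫) {T : V →ₗ[ℝ] V}
    (hT : ∀ x y, ⟪A (T x), y⟫ = ⟪A x, T y⟫) :
    ∃ M, IsLeast {μ | HasEigenvalue T μ} M ∧
      IsLeast {x | ∃ v : V, normA A v = 1 ∧ x = ⟪A (T v), v⟫} M := by
  let c := A.innerCore hAsym hApos
  exact @LinearMap.IsSymmetric.exists_isLeast_hasEigenvalue V c.toNormedAddCommGroup
    (InnerProductSpace.ofCore c.toCore) T (inferInstanceAs (FiniteDimensional ℝ V)) _ hT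

theorem stmt_5
    (A : V →ₗ[ℝ] V) (hAsym : A.IsSymmetric) (hApos : ∀ v : V, v ≠ 0 → 0 < ⟪A v, v⟫)
    (B : V →ₗ[ℝ] V) (hBsym : B.IsSymmetric) (hBpos : ∀ v : V, v ≠ 0 → 0 < ⟪B v, v⟫)
    (Binv : V →ₗ[ℝ] V) (h1 : B ∘ₗ Binv = LinearMap.id) (h2 : Binv ∘ₗ B = LinearMap.id) :
    sInf {μ : ℝ | Module.End.HasEigenvalue (B ∘ₗ A) μ} =
      (sSup {x : ℝ | ∃ v : V, normA A v = 1 ∧ x = ⟪Binv v, v⟫})⁻¹ ∧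
    sSup {μ : ℝ | Module.End.HasEigenvalue (B ∘ₗ A) μ} =
      (sInf {x : ℝ | ∃ v : V, normA A v = 1 ∧ x = ⟪Binv v, v⟫})⁻¹ := by
  rcases subsingleton_or_nontrivial V with hV | hV
  · simp [setOf_hasEigenvalue_eq_empty, Subsingleton.elim _ (0 : V), normA]
  have hAinj := A.injective_of_inner_self_pos hApos
  obtain ⟨T, hAT⟩ := A.exists_comp_eq_of_injective hAinj Binv
  have hAT' (x : V) : A (T x) = Binv x := LinearMap.congr_fun hAT x
  have hTsym (x y : V) : ⟪A (T x), y⟫ = ⟪A x, T y⟫ := by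
    rw [hAsym x, hAT', hAT', hBsym.of_comp_eq_id h1]
  obtain ⟨M, hMT, hMR⟩ := exists_isGreatest_hasEigenvalue_normA_sphere hAsym hApos hTsym
  obtain ⟨m, hmT, hmR⟩ := exists_isLeast_hasEigenvalue_normA_sphere hAsym hApos hTsym
  simp only [hAT'] at hMR hmR
  have hpos : ∀ μ ∈ {μ | HasEigenvalue T μ}, 0 < μ := by
    obtain ⟨v, hv, rfl⟩ := hmR.1
    have hv0 : v ≠ 0 := by
      rintro rfl
      simp [normA] at hv
    exact fun μ hμ => (inner_self_pos_of_comp_eq_id hBpos h1 hv0).trans_le (hmT.2 hμ)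
  rw [setOf_hasEigenvalue_comp_eq_image_inv hAinj h1 h2 hAT,
    (hMT.isLeast_image_inv hpos).csInf_eq, hMR.csSup_eq,
    (hmT.isGreatest_image_inv hpos).csSup_eq, hmR.csInf_eq]
  exact ⟨rfl, rfl⟩
end

section
/- Let V, W be finite-dimensional real inner product spaces, Π : W → V surjective, A : V → V symmetric positive definite, Ã = Πᵗ A Π, and B̃ : W → W linear with B = Π B̃ Πᵗ. Then the A-operator norm of I − BA on V equals the Ã-operator seminorm of Ĩ − B̃Ã on W: ‖I − BA‖_A = sup { |(Ĩ − B̃Ã)w|_Ã : w ∈ W, |w|_Ã = 1 }, where |w|_Ã = ⟨Ãw, w⟩^{1/2}. -/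
open scoped RealInnerProductSpace

theorem stmt_6
    {V W : Type*} [NormedAddCommGroup V] [InnerProductSpace ℝ V] [FiniteDimensional ℝ V]
    [NormedAddCommGroup W] [InnerProductSpace ℝ W] [FiniteDimensional ℝ W]
    (P : W →ₗ[ℝ] V) (hP : Function.Surjective P)
    (A : V →ₗ[ℝ] V) (hAsym : A.IsSymmetric) (hApos : ∀ v : V, v ≠ 0 → 0 < ⟪A v, v⟫)
    (Bt : W →ₗ[ℝ] W) (B : V →ₗ[ℝ] V) (hB : B = P ∘ₗ Bt ∘ₗ LinearMap.adjoint P)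
    (At : W →ₗ[ℝ] W) (hAt : At = LinearMap.adjoint P ∘ₗ A ∘ₗ P)
    (E : V →ₗ[ℝ] V) (hE : E = LinearMap.id - B ∘ₗ A)
    (Et : W →ₗ[ℝ] W) (hEt : Et = LinearMap.id - Bt ∘ₗ At) :
    sSup {y : ℝ | ∃ v : V, Real.sqrt ⟪A v, v⟫ = 1 ∧ y = Real.sqrt ⟪A (E v), E v⟫} =
    sSup {y : ℝ | ∃ w : W, Real.sqrt ⟪At w, w⟫ = 1 ∧ y = Real.sqrt ⟪At (Et w), Et w⟫} := by
  have hAtw : ∀ w : W, ⟪At w, w⟫ = ⟪A (P w), P w⟫ := by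
    intro w
    rw [hAt]
    simp [LinearMap.adjoint_inner_left]
  have hcomm : ∀ w : W, P (Et w) = E (P w) := by
    intro w
    rw [hEt, hE, hB, hAt]
    simp
  congr 1
  ext y
  constructor
  · rintro ⟨v, hv1, rfl⟩
    obtain ⟨w, rfl⟩ := hP v
    exact ⟨w, by rw [hAtw]; exact hv1, by rw [hAtw, hcomm]⟩
  · rintro ⟨w, hw1, rfl⟩
    exact ⟨P w, by rw [← hAtw]; exact hw1, by rw [hAtw, hcomm]⟩
end

section
/- Let V, W be finite-dimensional real inner product spaces, Π : W → V surjective, A : V → V symmetric positive definite, and B̃ : W → W symmetric positive definite. Set B = Π B̃ Πᵗ. Then λ_min(BA) = ( sup_{‖v‖_A = 1} inf_{Πw = v} ⟨B̃⁻¹w, w⟩ )⁻¹ and λ_max(BA) = ( inf_{‖v‖_A = 1} inf_{Πw = v} ⟨B̃⁻¹w, w⟩ )⁻¹. -/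
/-!
Since `Π` is onto, `B = Π B̃ Πᵗ` is symmetric positive definite, hence so is `A (BA)⁻¹ = B⁻¹`.
The fibre `{w | Π w = v}` is an affine space on which `w ↦ ⟨B̃⁻¹ w, w⟩` is a convex quadratic;
its critical point `w₀ = B̃ Πᵗ B⁻¹ v` lies in the fibre and `B̃⁻¹ w₀ = Πᵗ B⁻¹ v` is orthogonal to
`ker Π`, so the inner infimum is attained there with value `⟨B⁻¹ v, v⟩`. Now `(BA)⁻¹` is symmetric
for the energy inner product `⟨A ·, ·⟩` with Rayleigh quotient `⟨B⁻¹ v, v⟩`, so by the Rayleigh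
principle the extremes of that quotient on the `A`-unit sphere are the extreme eigenvalues of
`(BA)⁻¹`, which are positive and the reciprocals of those of `BA`.
-/

open scoped RealInnerProductSpace

open Module.End

theorem Module.End.setOf_hasEigenvalue_inv {K V : Type*} [Field K] [AddCommGroup V]
    [Module K V] [FiniteDimensional K V] (u : (Module.End K V)ˣ) :
    {μ | HasEigenvalue (↑u⁻¹ : Module.End K V) μ} =
      {μ | HasEigenvalue (u : Module.End K V) μ}⁻¹ := by
  simp only [hasEigenvalue_iff_mem_spectrum, Set.ofPred_mem_eq, spectrum.map_inv]

theorem IsGreatest.isLeast_inv_of_pos {s : Set ℝ} {a : ℝ} (h : IsGreatest s a)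
    (hs : ∀ x ∈ s, 0 < x) : IsLeast s⁻¹ a⁻¹ := by
  refine ⟨by simpa [Set.mem_inv] using h.1, fun x hx => ?_⟩
  rw [Set.mem_inv] at hx
  exact inv_le_of_inv_le₀ (inv_pos.mp (hs _ hx)) (h.2 hx)

theorem IsLeast.isGreatest_inv_of_pos {s : Set ℝ} {a : ℝ} (h : IsLeast s a)
    (hs : ∀ x ∈ s, 0 < x) : IsGreatest s⁻¹ a⁻¹ := by
  refine ⟨by simpa [Set.mem_inv] using h.1, fun x hx => ?_⟩
  rw [Set.mem_inv] at hx
  exact le_inv_of_le_inv₀ (hs _ h.1) (h.2 hx)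

section PositiveDefinite

variable {E : Type*} [NormedAddCommGroup E] [InnerProductSpace ℝ E] {G H : E →ₗ[ℝ] E}

theorem inner_apply_self_nonneg_of_pos (hGpos : ∀ v : E, v ≠ 0 → 0 < ⟪G v, v⟫) (v : E) :
    0 ≤ ⟪G v, v⟫ := by
  rcases eq_or_ne v 0 with rfl | hv
  · simp
  · exact (hGpos v hv).le

theorem injective_of_inner_apply_self_pos (hG : ∀ v : E, v ≠ 0 → 0 < ⟪G v, v⟫) :
    Function.Injective G := by
  rw [← LinearMap.ker_eq_bot, Submodule.eq_bot_iff]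
  intro v hv
  by_contra h
  simpa [LinearMap.mem_ker.mp hv] using hG v h

theorem LinearMap.IsSymmetric.inner_eq_of_comp_eq_id (hG : G.IsSymmetric)
    (h : G ∘ₗ H = LinearMap.id) (x y : E) : ⟪H x, y⟫ = ⟪G (H x), H y⟫ := by
  have hGH : G (H y) = y := LinearMap.congr_fun h y
  rw [hG, hGH]

theorem LinearMap.IsSymmetric.of_comp_eq_id_s8 (hG : G.IsSymmetric) (h : G ∘ₗ H = LinearMap.id) :
    H.IsSymmetric := fun x y => by
  have hGH : G (H x) = x := LinearMap.congr_fun h x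
  rw [hG.inner_eq_of_comp_eq_id h, hGH]

theorem LinearMap.IsSymmetric.inner_apply_self_pos_of_comp_eq_id (hG : G.IsSymmetric)
    (hGpos : ∀ v : E, v ≠ 0 → 0 < ⟪G v, v⟫) (h : G ∘ₗ H = LinearMap.id) {v : E} (hv : v ≠ 0) :
    0 < ⟪H v, v⟫ := by
  have hGH : G (H v) = v := LinearMap.congr_fun h v
  rw [hG.inner_eq_of_comp_eq_id h]
  exact hGpos _ fun hHv => hv (by rw [← hGH, hHv, map_zero])

theorem Module.End.HasEigenvalue.pos_of_inner_apply_self_pos {μ : ℝ}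
    (hG : ∀ v : E, v ≠ 0 → 0 < ⟪G v, v⟫) (hGH : ∀ v : E, v ≠ 0 → 0 < ⟪G (H v), v⟫)
    (hμ : HasEigenvalue H μ) : 0 < μ := by
  obtain ⟨v, hv⟩ := hμ.exists_hasEigenvector
  have h := hGH v hv.2
  rw [hv.apply_eq_smul, map_smul, real_inner_smul_left] at h
  exact pos_of_mul_pos_left h (hG v hv.2).le

variable {V : Type*} [NormedAddCommGroup V] [InnerProductSpace ℝ V]
  [FiniteDimensional ℝ E] [FiniteDimensional ℝ V]

theorem inner_conj_adjoint_apply_self_pos (hG : ∀ w : E, w ≠ 0 → 0 < ⟪G w, w⟫) {P : E →ₗ[ℝ] V}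
    (hP : Function.Surjective P) {v : V} (hv : v ≠ 0) :
    0 < ⟪(P ∘ₗ G ∘ₗ LinearMap.adjoint P) v, v⟫ := by
  have hker : (LinearMap.adjoint P).ker = ⊥ := by
    rw [← P.orthogonal_range, LinearMap.range_eq_top.mpr hP, Submodule.top_orthogonal_eq_bot]
  have hPv : LinearMap.adjoint P v ≠ 0 := fun h =>
    hv (LinearMap.ker_eq_bot.mp hker (h.trans (map_zero _).symm))
  rw [LinearMap.comp_apply, LinearMap.comp_apply, ← LinearMap.adjoint_inner_right]
  exact hG _ hPv

/-- The auxiliary space lemma: an element of the fibre `P w = v` at which the energy gradient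
`M w₀` is orthogonal to `ker P` minimises the energy on the fibre. -/
theorem isLeast_inner_apply_self_fiber {M : E →ₗ[ℝ] E} (hM : M.IsPositive) (P : E →ₗ[ℝ] V)
    {u v : V} {w₀ : E} (hw₀ : P w₀ = v) (hMw₀ : M w₀ = LinearMap.adjoint P u) :
    IsLeast {z | ∃ w : E, P w = v ∧ z = ⟪M w, w⟫} ⟪u, v⟫ := by
  have hval : ⟪M w₀, w₀⟫ = ⟪u, v⟫ := by
    rw [hMw₀, LinearMap.adjoint_inner_left, hw₀]
  refine ⟨⟨w₀, hw₀, hval.symm⟩, ?_⟩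
  rintro _ ⟨w, hw, rfl⟩
  obtain ⟨d, rfl⟩ : ∃ d, w = w₀ + d := ⟨w - w₀, by abel⟩
  have hd : P d = 0 := by simpa [hw₀] using hw
  have hcross : ⟪M w₀, d⟫ = 0 := by
    rw [hMw₀, LinearMap.adjoint_inner_left, hd, inner_zero_right]
  have hcross' : ⟪M d, w₀⟫ = 0 := by
    rw [hM.isSymmetric, real_inner_comm, hcross]
  rw [← hval, map_add, inner_add_left, inner_add_right, inner_add_right, hcross, hcross']
  linarith [hM.inner_nonneg_left d]

end PositiveDefinite

section Rayleigh

variable {E : Type*} [NormedAddCommGroup E] [InnerProductSpace ℝ E] {S : E →ₗ[ℝ] E}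

theorem Module.End.HasEigenvalue.exists_norm_eq_one_inner_eq {μ : ℝ} (hμ : HasEigenvalue S μ) :
    ∃ v : E, ‖v‖ = 1 ∧ μ = ⟪S v, v⟫ := by
  obtain ⟨v, hv⟩ := hμ.exists_hasEigenvector
  have hv0 : ‖v‖ ≠ 0 := norm_ne_zero_iff.mpr hv.2
  refine ⟨‖v‖⁻¹ • v, by simp [norm_smul, hv0], ?_⟩
  rw [map_smul, hv.apply_eq_smul, real_inner_smul_left, real_inner_smul_left,
    real_inner_smul_right, real_inner_self_eq_norm_sq]
  field_simp

variable [FiniteDimensional ℝ E]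

theorem LinearMap.IsSymmetric.hasEigenvalue_of_isExtrOn_sphere (hS : S.IsSymmetric) {x₀ : E}
    (hx₀ : ‖x₀‖ = 1) (hext : IsExtrOn (fun x => ⟪S x, x⟫) (Metric.sphere 0 1) x₀) :
    HasEigenvalue S ⟪S x₀, x₀⟫ := by
  have := FiniteDimensional.complete ℝ E
  have hT : IsSelfAdjoint (LinearMap.toContinuousLinearMap S) := hS.isSelfAdjoint
  have hext' : IsLocalExtrOn (LinearMap.toContinuousLinearMap S).reApplyInnerSelf
      (Metric.sphere 0 ‖x₀‖) x₀ := by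
    rw [hx₀]
    exact hext.localize
  have hSx₀ := hT.eq_smul_self_of_isLocalExtrOn_real hext'
  have hv : HasEigenvector S ⟪S x₀, x₀⟫ x₀ := by
    refine ⟨mem_eigenspace_iff.mpr ?_, by rintro rfl; simp at hx₀⟩
    simpa [ContinuousLinearMap.rayleighQuotient, ContinuousLinearMap.reApplyInnerSelf, hx₀]
      using hSx₀
  exact hasEigenvalue_of_hasEigenvector hv

theorem continuous_inner_apply_self (S : E →ₗ[ℝ] E) : Continuous fun x : E => ⟪S x, x⟫ :=
  S.continuous_of_finiteDimensional.inner continuous_id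

variable [Nontrivial E]

theorem LinearMap.IsSymmetric.isGreatest_setOf_hasEigenvalue (hS : S.IsSymmetric) :
    IsGreatest {μ | HasEigenvalue S μ} (sSup {x | ∃ v : E, ‖v‖ = 1 ∧ x = ⟪S v, v⟫}) := by
  obtain ⟨x₀, hx₀, hmax⟩ := (isCompact_sphere (0 : E) 1).exists_isMaxOn
    (NormedSpace.sphere_nonempty.mpr zero_le_one)
    (continuous_inner_apply_self S).continuousOn
  rw [mem_sphere_zero_iff_norm] at hx₀
  have hgreatest : IsGreatest {x | ∃ v : E, ‖v‖ = 1 ∧ x = ⟪S v, v⟫} ⟪S x₀, x₀⟫ :=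
    ⟨⟨x₀, hx₀, rfl⟩, by
      rintro _ ⟨v, hv, rfl⟩
      exact hmax (mem_sphere_zero_iff_norm.mpr hv)⟩
  rw [hgreatest.csSup_eq]
  exact ⟨hS.hasEigenvalue_of_isExtrOn_sphere hx₀ hmax.isExtr,
    fun μ hμ => hgreatest.2 hμ.exists_norm_eq_one_inner_eq⟩

theorem LinearMap.IsSymmetric.isLeast_setOf_hasEigenvalue (hS : S.IsSymmetric) :
    IsLeast {μ | HasEigenvalue S μ} (sInf {x | ∃ v : E, ‖v‖ = 1 ∧ x = ⟪S v, v⟫}) := by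
  obtain ⟨x₀, hx₀, hmin⟩ := (isCompact_sphere (0 : E) 1).exists_isMinOn
    (NormedSpace.sphere_nonempty.mpr zero_le_one)
    (continuous_inner_apply_self S).continuousOn
  rw [mem_sphere_zero_iff_norm] at hx₀
  have hleast : IsLeast {x | ∃ v : E, ‖v‖ = 1 ∧ x = ⟪S v, v⟫} ⟪S x₀, x₀⟫ :=
    ⟨⟨x₀, hx₀, rfl⟩, by
      rintro _ ⟨v, hv, rfl⟩
      exact hmin (mem_sphere_zero_iff_norm.mpr hv)⟩
  rw [hleast.csInf_eq]
  exact ⟨hS.hasEigenvalue_of_isExtrOn_sphere hx₀ hmin.isExtr,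
    fun μ hμ => hleast.2 hμ.exists_norm_eq_one_inner_eq⟩

end Rayleigh

section Energy

variable {E : Type*} [NormedAddCommGroup E] [InnerProductSpace ℝ E]

/-- `E` with the energy inner product `⟪K x, y⟫`, given by `WithEnergy.innerProductCore` when `K`
is symmetric positive definite. -/
def WithEnergy (_K : E →ₗ[ℝ] E) : Type _ := E

variable (K : E →ₗ[ℝ] E)

instance : AddCommGroup (WithEnergy K) := inferInstanceAs (AddCommGroup E)

instance : Module ℝ (WithEnergy K) := inferInstanceAs (Module ℝ E)

instance [FiniteDimensional ℝ E] : FiniteDimensional ℝ (WithEnergy K) :=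
  inferInstanceAs (FiniteDimensional ℝ E)

instance [Nontrivial E] : Nontrivial (WithEnergy K) := inferInstanceAs (Nontrivial E)

variable {K}

abbrev WithEnergy.innerProductCore (hK : K.IsSymmetric) (hKpos : ∀ v : E, v ≠ 0 → 0 < ⟪K v, v⟫) :
    InnerProductSpace.Core ℝ (WithEnergy K) where
  inner x y := ⟪K x, y⟫
  conj_inner_symm x y := by
    simp only [starRingEnd_apply, star_trivial]
    exact (hK y x).trans (real_inner_comm _ _)
  re_inner_nonneg x := inner_apply_self_nonneg_of_pos hKpos x
  definite x hx := by
    by_contra h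
    exact (hKpos x h).ne' hx
  add_left x y z := by
    rw [show K (x + y) = K x + K y from map_add K x y]
    exact inner_add_left (K x) (K y) z
  smul_left x y c := by
    rw [show K (c • x) = c • K x from map_smul K c x]
    exact real_inner_smul_left (K x) y c

variable [FiniteDimensional ℝ E] [Nontrivial E] {S : E →ₗ[ℝ] E}

theorem isGreatest_isLeast_setOf_hasEigenvalue_of_isSymmetric_comp (hK : K.IsSymmetric)
    (hKpos : ∀ v : E, v ≠ 0 → 0 < ⟪K v, v⟫) (hKS : (K ∘ₗ S).IsSymmetric) :
    IsGreatest {μ | HasEigenvalue S μ}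
        (sSup {x | ∃ v : E, Real.sqrt ⟪K v, v⟫ = 1 ∧ x = ⟪K (S v), v⟫}) ∧
      IsLeast {μ | HasEigenvalue S μ}
        (sInf {x | ∃ v : E, Real.sqrt ⟪K v, v⟫ = 1 ∧ x = ⟪K (S v), v⟫}) := by
  let core := WithEnergy.innerProductCore hK hKpos
  let := core.toNormedAddCommGroup
  let := InnerProductSpace.ofCore core.toCore
  let S' : WithEnergy K →ₗ[ℝ] WithEnergy K := S
  have hS' : S'.IsSymmetric := fun x y => (hKS x y).trans (hK x (S y)).symm
  -- the norm of `WithEnergy K` is `√⟪K v, v⟫`, so the sets below are those of the goal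
  exact ⟨hS'.isGreatest_setOf_hasEigenvalue, hS'.isLeast_setOf_hasEigenvalue⟩

end Energy

theorem sInf_sSup_setOf_hasEigenvalue_eq_inv {E : Type*} [NormedAddCommGroup E]
    [InnerProductSpace ℝ E] [FiniteDimensional ℝ E] {K : E →ₗ[ℝ] E} (hK : K.IsSymmetric)
    (hKpos : ∀ v : E, v ≠ 0 → 0 < ⟪K v, v⟫) (u : (Module.End ℝ E)ˣ)
    (hKu : (K ∘ₗ ↑u⁻¹).IsSymmetric)
    (hKupos : ∀ v : E, v ≠ 0 → 0 < ⟪K ((↑u⁻¹ : E →ₗ[ℝ] E) v), v⟫) :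
    sInf {μ | HasEigenvalue (u : Module.End ℝ E) μ} =
        (sSup {x | ∃ v : E, Real.sqrt ⟪K v, v⟫ = 1 ∧ x = ⟪K ((↑u⁻¹ : E →ₗ[ℝ] E) v), v⟫})⁻¹ ∧
      sSup {μ | HasEigenvalue (u : Module.End ℝ E) μ} =
        (sInf {x | ∃ v : E, Real.sqrt ⟪K v, v⟫ = 1 ∧ x = ⟪K ((↑u⁻¹ : E →ₗ[ℝ] E) v), v⟫})⁻¹ := by
  rcases subsingleton_or_nontrivial E with hE | hE
  · have hnoeig : {μ | HasEigenvalue (u : Module.End ℝ E) μ} = ∅ :=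
      Set.eq_empty_of_forall_notMem fun μ hμ => by
        obtain ⟨v, hv⟩ := hμ.exists_hasEigenvector
        exact hv.2 (Subsingleton.elim v 0)
    have hnosphere : {x | ∃ v : E, Real.sqrt ⟪K v, v⟫ = 1 ∧
        x = ⟪K ((↑u⁻¹ : E →ₗ[ℝ] E) v), v⟫} = ∅ :=
      Set.eq_empty_of_forall_notMem fun x ⟨v, hv, _⟩ => by
        simp [Subsingleton.elim v 0] at hv
    rw [hnoeig, hnosphere]
    simp
  · obtain ⟨hmax, hmin⟩ := isGreatest_isLeast_setOf_hasEigenvalue_of_isSymmetric_comp hK hKpos hKu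
    have hpos : ∀ μ ∈ {μ | HasEigenvalue (↑u⁻¹ : Module.End ℝ E) μ}, 0 < μ := fun _ hμ =>
      hμ.pos_of_inner_apply_self_pos hKpos hKupos
    rw [← inv_inv {μ | HasEigenvalue (u : Module.End ℝ E) μ}, ← setOf_hasEigenvalue_inv]
    exact ⟨(hmax.isLeast_inv_of_pos hpos).csInf_eq, (hmin.isGreatest_inv_of_pos hpos).csSup_eq⟩

theorem stmt_8
    {V W : Type*} [NormedAddCommGroup V] [InnerProductSpace ℝ V] [FiniteDimensional ℝ V]
    [NormedAddCommGroup W] [InnerProductSpace ℝ W] [FiniteDimensional ℝ W]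
    (P : W →ₗ[ℝ] V) (hP : Function.Surjective P)
    (A : V →ₗ[ℝ] V) (hAsym : A.IsSymmetric) (hApos : ∀ v : V, v ≠ 0 → 0 < ⟪A v, v⟫)
    (Bt : W →ₗ[ℝ] W) (hBtsym : Bt.IsSymmetric) (hBtpos : ∀ w : W, w ≠ 0 → 0 < ⟪Bt w, w⟫)
    (Btinv : W →ₗ[ℝ] W) (h1 : Bt ∘ₗ Btinv = LinearMap.id) (h2 : Btinv ∘ₗ Bt = LinearMap.id)
    (B : V →ₗ[ℝ] V) (hB : B = P ∘ₗ Bt ∘ₗ LinearMap.adjoint P) :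
    sInf {μ : ℝ | Module.End.HasEigenvalue (B ∘ₗ A) μ} =
      (sSup {x : ℝ | ∃ v : V, Real.sqrt ⟪A v, v⟫ = 1 ∧
          x = sInf {z : ℝ | ∃ w : W, P w = v ∧ z = ⟪Btinv w, w⟫}})⁻¹ ∧
    sSup {μ : ℝ | Module.End.HasEigenvalue (B ∘ₗ A) μ} =
      (sInf {x : ℝ | ∃ v : V, Real.sqrt ⟪A v, v⟫ = 1 ∧
          x = sInf {z : ℝ | ∃ w : W, P w = v ∧ z = ⟪Btinv w, w⟫}})⁻¹ := by
  have hBsym : B.IsSymmetric := hB ▸ hBtsym.conj_adjoint P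
  have hBpos : ∀ v : V, v ≠ 0 → 0 < ⟪B v, v⟫ := fun v hv =>
    hB ▸ inner_conj_adjoint_apply_self_pos hBtpos hP hv
  obtain ⟨u, hu⟩ : IsUnit (B ∘ₗ A) := (LinearMap.isUnit_iff_ker_eq_bot _).mpr <|
    LinearMap.ker_eq_bot.mpr <|
      (injective_of_inner_apply_self_pos hBpos).comp (injective_of_inner_apply_self_pos hApos)
  have hBAu : B ∘ₗ (A ∘ₗ ↑u⁻¹) = LinearMap.id := by
    rw [← LinearMap.comp_assoc, ← hu]
    exact u.mul_inv
  have hBtinv : Btinv.IsPositive :=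
    ⟨hBtsym.of_comp_eq_id_s8 h1, fun w => inner_apply_self_nonneg_of_pos
      (fun _ hw => hBtsym.inner_apply_self_pos_of_comp_eq_id hBtpos h1 hw) w⟩
  have hfiber (v : V) : sInf {z | ∃ w : W, P w = v ∧ z = ⟪Btinv w, w⟫} =
      ⟪A ((↑u⁻¹ : V →ₗ[ℝ] V) v), v⟫ := by
    set w₀ := Bt (LinearMap.adjoint P (A ((↑u⁻¹ : V →ₗ[ℝ] V) v)))
    have hw₀ : P w₀ = v := by
      simpa only [hB, LinearMap.comp_apply, LinearMap.id_apply] using LinearMap.congr_fun hBAu v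
    exact (isLeast_inner_apply_self_fiber hBtinv P hw₀ (LinearMap.congr_fun h2 _)).csInf_eq
  simp_rw [hfiber, ← hu]
  exact sInf_sSup_setOf_hasEigenvalue_eq_inv hAsym hApos u (hBsym.of_comp_eq_id_s8 hBAu)
    fun v hv => hBsym.inner_apply_self_pos_of_comp_eq_id hBpos hBAu hv
end

section
/- Let V be a finite-dimensional real inner product space, A : V → V symmetric positive semidefinite, and for j = 1,…,J let Vⱼ be finite-dimensional vector spaces with linear maps Πⱼ : Vⱼ → V such that V = ∑ⱼ Πⱼ Vⱼ, local operators Aⱼ = Πⱼᵗ A Πⱼ, and local solvers Rⱼ : Vⱼ → Vⱼ. Define Tⱼ = Πⱼ Rⱼ Πⱼᵗ A and let B_SSC satisfy I − B_SSC A = (I − T_J)(I − T_{J−1})⋯(I − T₁). Then B_SSC = Π (R̃⁻¹ + L̃)⁻¹ Πᵗ on range(A), where Π = [Π₁, …, Π_J] : ∏ⱼ Vⱼ → V, Ã = Πᵗ A Π has blocks A_{ij} = Πᵢᵗ A Πⱼ, L̃ is the block strictly lower triangular part of Ã, and R̃ = diag(R₁, …, R_J); here (R̃⁻¹ + L̃)⁻¹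 is interpreted formally via the block lower triangular inverse formula when some Rⱼ are singular. -/
open scoped RealInnerProductSpace

variable {J : ℕ} {V : Fin J → Type*} [∀ j, NormedAddCommGroup (V j)]
  [∀ j, InnerProductSpace ℝ (V j)] [∀ j, FiniteDimensional ℝ (V j)]

/-- Embed a block `f : V j →ₗ V i` as an endomorphism of the product space. -/
noncomputable def blk (i j : Fin J) (f : V j →ₗ[ℝ] V i) : (∀ k, V k) →ₗ[ℝ] (∀ k, V k) :=
  LinearMap.single ℝ V i ∘ₗ f ∘ₗ LinearMap.proj j

/-- The term of the block-triangular inverse formula associated with a chain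
`c 0 < c 1 < ⋯ < c s`: the composition `N_{c s} M_{c s, c (s-1)} N_{c (s-1)} ⋯ M_{c 1, c 0} N_{c 0}`. -/
noncomputable def chainTerm (M : ∀ i j : Fin J, V j →ₗ[ℝ] V i) (N : ∀ j : Fin J, V j →ₗ[ℝ] V j)
    (s : ℕ) (c : Fin (s + 1) → Fin J) : (∀ k, V k) →ₗ[ℝ] (∀ k, V k) :=
  blk (c (Fin.last s)) (c (Fin.last s)) (N (c (Fin.last s))) *
    (List.ofFn (fun t : Fin s =>
      blk (c t.rev.succ) (c t.rev.castSucc) (M (c t.rev.succ) (c t.rev.castSucc)) *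
        blk (c t.rev.castSucc) (c t.rev.castSucc) (N (c t.rev.castSucc)))).prod

set_option linter.unusedSectionVars false

lemma blk_apply (i j : Fin J) (f : V j →ₗ[ℝ] V i) (x : ∀ k, V k) :
    blk i j f x = Pi.single i (f (x j)) := rfl

lemma blk_mul (i j k : Fin J) (f : V j →ₗ[ℝ] V i) (g : V k →ₗ[ℝ] V j) :
    blk i j f * blk j k g = blk i k (f ∘ₗ g) := by
  apply LinearMap.ext; intro x
  show blk i j f (blk j k g x) = _
  rw [blk_apply, blk_apply, blk_apply, Pi.single_eq_same]; rfl

lemma chainTerm_zero (M : ∀ i j : Fin J, V j →ₗ[ℝ] V i) (N : ∀ j : Fin J, V j →ₗ[ℝ] V j)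
    (c : Fin 1 → Fin J) : chainTerm M N 0 c = blk (c 0) (c 0) (N (c 0)) := by
  rw [chainTerm, show (Fin.last 0) = (0 : Fin 1) from rfl]
  simp

lemma chainTerm_succ (M : ∀ i j : Fin J, V j →ₗ[ℝ] V i) (N : ∀ j : Fin J, V j →ₗ[ℝ] V j)
    (s : ℕ) (c : Fin (s + 2) → Fin J) :
    chainTerm M N (s + 1) c =
      blk (c (Fin.last (s+1))) (c (Fin.last (s+1))) (N (c (Fin.last (s+1)))) *
        (blk (c (Fin.last (s+1))) (c ((Fin.last s).castSucc))
          (M (c (Fin.last (s+1))) (c ((Fin.last s).castSucc))) *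
          chainTerm M N s (fun t => c t.castSucc)) := by
  have tail_eq : (List.ofFn fun i : Fin s =>
      blk (c i.succ.rev.succ) (c i.succ.rev.castSucc)
          (M (c i.succ.rev.succ) (c i.succ.rev.castSucc)) *
        blk (c i.succ.rev.castSucc) (c i.succ.rev.castSucc) (N (c i.succ.rev.castSucc)))
    = List.ofFn fun t : Fin s =>
        blk (c t.rev.succ.castSucc) (c t.rev.castSucc.castSucc)
          (M (c t.rev.succ.castSucc) (c t.rev.castSucc.castSucc)) *
        blk (c t.rev.castSucc.castSucc) (c t.rev.castSucc.castSucc)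
          (N (c t.rev.castSucc.castSucc)) := by
    congr 1; funext i
    rw [Fin.rev_succ, Fin.succ_castSucc]
  unfold chainTerm
  rw [List.ofFn_succ, List.prod_cons,
    show (0 : Fin (s+1)).rev = Fin.last s from by ext; simp [Fin.rev],
    show (Fin.last s).succ = Fin.last (s+1) from rfl, tail_eq, mul_assoc]

open Classical in
/-- The set of strictly increasing chains of length `s+1` with all values `< n`. -/
noncomputable def chainSet (J n s : ℕ) : Finset (Fin (s + 1) → Fin J) :=
  Finset.univ.filter fun c => StrictMono c ∧ ∀ t, (c t : ℕ) < n

lemma mem_chainSet {J n s : ℕ} {c : Fin (s + 1) → Fin J} :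
    c ∈ chainSet J n s ↔ StrictMono c ∧ ∀ t, (c t : ℕ) < n := by
  simp [chainSet]

lemma chainSet_eq_empty {J n s : ℕ} (h : n ≤ s) {c : Fin (s + 1) → Fin J}
    (hc : c ∈ chainSet J n s) : False := by
  rw [mem_chainSet] at hc
  have hinj : Function.Injective (fun t : Fin (s+1) => (⟨(c t : ℕ), hc.2 t⟩ : Fin n)) := by
    intro a b hab
    have hval := congrArg Fin.val hab
    simp only at hval
    exact hc.1.injective (Fin.ext hval)
  have := Fintype.card_le_of_injective _ hinj
  simp only [Fintype.card_fin] at this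
  omega

/-- The partial sums of the block-triangular inverse formula. -/
noncomputable def Ysum (M : ∀ i j : Fin J, V j →ₗ[ℝ] V i) (N : ∀ j : Fin J, V j →ₗ[ℝ] V j)
    (n : ℕ) : (∀ k, V k) →ₗ[ℝ] (∀ k, V k) :=
  ∑ s ∈ Finset.range n, ((-1 : ℝ)) ^ s • ∑ c ∈ chainSet J n s, chainTerm M N s c

lemma DAchain (M : ∀ i j : Fin J, V j →ₗ[ℝ] V i) (N : ∀ j : Fin J, V j →ₗ[ℝ] V j)
    (E : (∀ k, V k) →ₗ[ℝ] (∀ k, V k))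
    (hDA : ∀ (j a b : Fin J) (h : V b →ₗ[ℝ] V a),
      blk j j (N j) * (E * blk a b h) = blk j b (N j ∘ₗ M j a ∘ₗ h))
    (j : Fin J) (s : ℕ) (c : Fin (s + 1) → Fin J) :
    blk j j (N j) * (E * chainTerm M N s c)
      = blk j j (N j) * (blk j (c (Fin.last s)) (M j (c (Fin.last s))) * chainTerm M N s c) := by
  unfold chainTerm
  rw [← mul_assoc E, ← mul_assoc (blk j j (N j)), hDA]
  conv_rhs => rw [← mul_assoc, ← mul_assoc, blk_mul, blk_mul]
  rw [LinearMap.comp_assoc]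

lemma chainTerm_top (M : ∀ i j : Fin J, V j →ₗ[ℝ] V i) (N : ∀ j : Fin J, V j →ₗ[ℝ] V j)
    (E : (∀ k, V k) →ₗ[ℝ] (∀ k, V k))
    (hDA : ∀ (j a b : Fin J) (h : V b →ₗ[ℝ] V a),
      blk j j (N j) * (E * blk a b h) = blk j b (N j ∘ₗ M j a ∘ₗ h))
    (j : Fin J) (s : ℕ) (c : Fin (s + 2) → Fin J) (hlast : c (Fin.last (s + 1)) = j) :
    chainTerm M N (s + 1) c
      = blk j j (N j) * (E * chainTerm M N s (fun t => c t.castSucc)) := by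
  rw [chainTerm_succ, hlast, DAchain M N E hDA j s (fun t => c t.castSucc)]

lemma Ysum_succ (M : ∀ i j : Fin J, V j →ₗ[ℝ] V i) (N : ∀ j : Fin J, V j →ₗ[ℝ] V j)
    (E : (∀ k, V k) →ₗ[ℝ] (∀ k, V k))
    (hDA : ∀ (j a b : Fin J) (h : V b →ₗ[ℝ] V a),
      blk j j (N j) * (E * blk a b h) = blk j b (N j ∘ₗ M j a ∘ₗ h))
    (n : ℕ) (hn : n < J) :
    Ysum M N (n + 1) = blk ⟨n, hn⟩ ⟨n, hn⟩ (N ⟨n, hn⟩) + Ysum M N n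
      - blk ⟨n, hn⟩ ⟨n, hn⟩ (N ⟨n, hn⟩) * (E * Ysum M N n) := by
  classical
  set nn : Fin J := ⟨n, hn⟩ with hnn
  set D := blk nn nn (N nn) with hD
  -- split each chain set according to whether the top index is `n`
  have hsplit : ∀ s : ℕ, (∑ c ∈ chainSet J (n+1) s, chainTerm M N s c)
      = (∑ c ∈ chainSet J n s, chainTerm M N s c)
        + ∑ c ∈ (chainSet J (n+1) s).filter (fun c => ¬ ∀ t, (c t : ℕ) < n),
            chainTerm M N s c := by
    intro s
    rw [← Finset.sum_filter_add_sum_filter_not (chainSet J (n+1) s)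
      (fun c => ∀ t, (c t : ℕ) < n)]
    congr 1
    apply Finset.sum_congr _ (fun _ _ => rfl)
    ext c
    simp only [Finset.mem_filter, mem_chainSet]
    constructor
    · rintro ⟨⟨hm, -⟩, hv⟩; exact ⟨hm, hv⟩
    · rintro ⟨hm, hv⟩; exact ⟨⟨hm, fun t => Nat.lt_succ_of_lt (hv t)⟩, hv⟩
  -- membership in the "top" part
  have hmemtop : ∀ (s : ℕ) (c : Fin (s+1) → Fin J),
      c ∈ (chainSet J (n+1) s).filter (fun c => ¬ ∀ t, (c t : ℕ) < n)
        ↔ StrictMono c ∧ (∀ t, (c t : ℕ) < n + 1) ∧ c (Fin.last s) = nn := by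
    intro s c
    simp only [Finset.mem_filter, mem_chainSet]
    constructor
    · rintro ⟨⟨hm, hv⟩, hnot⟩
      refine ⟨hm, hv, ?_⟩
      push_neg at hnot
      obtain ⟨t, ht⟩ := hnot
      have h1 : (c t : ℕ) ≤ (c (Fin.last s) : ℕ) := hm.monotone (Fin.le_last t)
      have h2 := hv (Fin.last s)
      ext
      simp only [hnn]
      omega
    · rintro ⟨hm, hv, hlast⟩
      refine ⟨⟨hm, hv⟩, fun hall => ?_⟩
      have := hall (Fin.last s)
      rw [hlast, hnn] at this
      simp only at this
      omega
  -- the top part for s = 0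
  have htop0 : (∑ c ∈ (chainSet J (n+1) 0).filter (fun c => ¬ ∀ t, (c t : ℕ) < n),
      chainTerm M N 0 c) = D := by
    have hsingle : (chainSet J (n+1) 0).filter (fun c => ¬ ∀ t, (c t : ℕ) < n)
        = {fun _ => nn} := by
      ext c
      rw [hmemtop 0 c, Finset.mem_singleton]
      haveI : Unique (Fin (0+1)) := inferInstanceAs (Unique (Fin 1))
      constructor
      · rintro ⟨-, -, hlast⟩
        funext t
        rw [show t = Fin.last 0 from Subsingleton.elim _ _, hlast]
      · rintro rfl
        exact ⟨Subsingleton.strictMono _, fun t => by simp [hnn], rfl⟩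
    rw [hsingle, Finset.sum_singleton, chainTerm_zero]
  -- the top part for s + 1
  have htops : ∀ s : ℕ, (∑ c ∈ (chainSet J (n+1) (s+1)).filter (fun c => ¬ ∀ t, (c t : ℕ) < n),
      chainTerm M N (s+1) c)
        = D * (E * ∑ c ∈ chainSet J n s, chainTerm M N s c) := by
    intro s
    rw [Finset.mul_sum, Finset.mul_sum]
    refine Finset.sum_nbij' (fun c => fun t => c t.castSucc) (fun c => Fin.snoc c nn)
      ?_ ?_ ?_ ?_ ?_
    · -- forward membership
      intro c hc
      rw [hmemtop] at hc
      obtain ⟨hm, hv, hlast⟩ := hc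
      rw [mem_chainSet]
      refine ⟨hm.comp Fin.strictMono_castSucc, fun t => ?_⟩
      have h1 : c t.castSucc < c (Fin.last (s+1)) := hm (Fin.castSucc_lt_last t)
      rw [hlast] at h1
      exact h1
    · -- backward membership
      intro c hc
      rw [mem_chainSet] at hc
      obtain ⟨hm, hv⟩ := hc
      rw [hmemtop]
      have hsm : StrictMono (Fin.snoc c nn : Fin (s+2) → Fin J) := by
        intro a b hab
        induction b using Fin.lastCases with
        | last =>
          have ha : a ≠ Fin.last (s+1) := by
            rintro rfl
            exact absurd hab (lt_irrefl _)
          obtain ⟨a', rfl⟩ : ∃ a', a = a'.castSucc :=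
            ⟨a.castPred ha, (Fin.castSucc_castPred a ha).symm⟩
          rw [Fin.snoc_castSucc, Fin.snoc_last]
          exact Fin.lt_def.mpr (hv a')
        | cast b' =>
          have ha : a ≠ Fin.last (s+1) := by
            rintro rfl
            exact absurd (lt_trans hab (Fin.castSucc_lt_last b')) (lt_irrefl _)
          obtain ⟨a', rfl⟩ : ∃ a', a = a'.castSucc :=
            ⟨a.castPred ha, (Fin.castSucc_castPred a ha).symm⟩
          rw [Fin.snoc_castSucc, Fin.snoc_castSucc]
          exact hm (Fin.castSucc_lt_castSucc_iff.mp hab)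
      refine ⟨hsm, ?_, Fin.snoc_last _ _⟩
      intro t
      refine Fin.lastCases ?_ ?_ t
      · simp only [Fin.snoc_last]; exact Nat.lt_succ_self n
      · intro t'
        simp only [Fin.snoc_castSucc]
        exact Nat.lt_succ_of_lt (hv t')
    · -- left inverse
      intro c hc
      rw [hmemtop] at hc
      funext t
      refine Fin.lastCases ?_ ?_ t
      · simp only [Fin.snoc_last]; exact hc.2.2.symm
      · intro t'; simp only [Fin.snoc_castSucc]
    · -- right inverse
      intro c hc
      funext t
      simp only [Fin.snoc_castSucc]
    · -- term equality
      intro c hc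
      rw [hmemtop] at hc
      exact chainTerm_top M N E hDA nn s c hc.2.2
  -- now assemble everything
  unfold Ysum
  calc (∑ s ∈ Finset.range (n+1), ((-1:ℝ)) ^ s • ∑ c ∈ chainSet J (n+1) s, chainTerm M N s c)
      = ∑ s ∈ Finset.range (n+1), (((-1:ℝ)) ^ s • ∑ c ∈ chainSet J n s, chainTerm M N s c
          + ((-1:ℝ)) ^ s • ∑ c ∈ (chainSet J (n+1) s).filter (fun c => ¬ ∀ t, (c t : ℕ) < n),
              chainTerm M N s c) := by
        refine Finset.sum_congr rfl (fun s _ => ?_)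
        rw [hsplit s, smul_add]
    _ = (∑ s ∈ Finset.range (n+1), ((-1:ℝ)) ^ s • ∑ c ∈ chainSet J n s, chainTerm M N s c)
        + ∑ s ∈ Finset.range (n+1), ((-1:ℝ)) ^ s •
            ∑ c ∈ (chainSet J (n+1) s).filter (fun c => ¬ ∀ t, (c t : ℕ) < n),
              chainTerm M N s c := Finset.sum_add_distrib
    _ = Ysum M N n + (D - D * (E * Ysum M N n)) := by
        congr 1
        · rw [Finset.sum_range_succ]
          have hzero : (∑ c ∈ chainSet J n n, chainTerm M N n c) = 0 :=
            Finset.sum_eq_zero (fun c hc => (chainSet_eq_empty le_rfl hc).elim)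
          rw [hzero, smul_zero, add_zero]
          rfl
        · rw [Finset.sum_range_succ' (fun s => ((-1:ℝ)) ^ s •
            ∑ c ∈ (chainSet J (n+1) s).filter (fun c => ¬ ∀ t, (c t : ℕ) < n),
              chainTerm M N s c) n]
          rw [pow_zero, one_smul, htop0]
          have hterm : ∀ s : ℕ, ((-1:ℝ)) ^ (s+1) •
              (∑ c ∈ (chainSet J (n+1) (s+1)).filter (fun c => ¬ ∀ t, (c t : ℕ) < n),
                chainTerm M N (s+1) c)
              = -(D * (E * (((-1:ℝ)) ^ s • ∑ c ∈ chainSet J n s, chainTerm M N s c))) := by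
            intro s
            rw [htops s, pow_succ, mul_comm (((-1:ℝ))^s) (-1), mul_smul, neg_one_smul,
              mul_smul_comm, mul_smul_comm]
          rw [Finset.sum_congr rfl (fun s _ => hterm s), Finset.sum_neg_distrib]
          rw [show (∑ s ∈ Finset.range n, D * (E * (((-1:ℝ)) ^ s •
              ∑ c ∈ chainSet J n s, chainTerm M N s c)))
            = D * (E * Ysum M N n) from ?_]
          · abel
          · rw [Ysum, Finset.mul_sum, Finset.mul_sum]
    _ = D + Ysum M N n - D * (E * Ysum M N n) := by abel


theorem stmt_14
    {𝒱 : Type*} [NormedAddCommGroup 𝒱] [InnerProductSpace ℝ 𝒱] [FiniteDimensional ℝ 𝒱]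
    (A : 𝒱 →ₗ[ℝ] 𝒱) (hAsym : A.IsSymmetric) (hApos : ∀ v : 𝒱, 0 ≤ ⟪A v, v⟫)
    (P : ∀ j : Fin J, V j →ₗ[ℝ] 𝒱)
    (Pi : (∀ k, V k) →ₗ[ℝ] 𝒱) (hPi : Pi = ∑ j : Fin J, P j ∘ₗ LinearMap.proj j)
    (hsurj : Function.Surjective Pi)
    (PiT : 𝒱 →ₗ[ℝ] ∀ k, V k) (hPiT : PiT = LinearMap.pi fun j => LinearMap.adjoint (P j))
    (R : ∀ j : Fin J, V j →ₗ[ℝ] V j)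
    (T : ∀ j : Fin J, 𝒱 →ₗ[ℝ] 𝒱)
    (hT : ∀ j, T j = P j ∘ₗ R j ∘ₗ LinearMap.adjoint (P j) ∘ₗ A)
    (Ablk : ∀ i j : Fin J, V j →ₗ[ℝ] V i)
    (hAblk : ∀ i j, Ablk i j = LinearMap.adjoint (P i) ∘ₗ A ∘ₗ P j)
    (G : (∀ k, V k) →ₗ[ℝ] (∀ k, V k))
    (hG : G = (∑ j : Fin J, blk j j (R j)) +
      ∑ s ∈ Finset.Icc 1 (J - 1), ((-1 : ℝ)) ^ s •
        ∑ᶠ c : {c : Fin (s + 1) → Fin J // StrictMono c}, chainTerm Ablk R s c.val)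
    (Bssc : 𝒱 →ₗ[ℝ] 𝒱)
    (hBssc : (1 : 𝒱 →ₗ[ℝ] 𝒱) - Bssc ∘ₗ A =
      (List.ofFn fun t : Fin J => (1 : 𝒱 →ₗ[ℝ] 𝒱) - T t.rev).prod) :
    ∀ x ∈ LinearMap.range A, Bssc x = (Pi ∘ₗ G ∘ₗ PiT) x := by
  classical
  -- basic computation rules
  have hPiSingle : ∀ (j : Fin J) (w : V j), Pi (_root_.Pi.single j w) = P j w := by
    intro j w
    rw [hPi]
    simp only [LinearMap.coe_sum, Finset.sum_apply, LinearMap.comp_apply, LinearMap.proj_apply]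
    rw [Finset.sum_eq_single j]
    · rw [_root_.Pi.single_eq_same]
    · intro k _ hk
      rw [_root_.Pi.single_eq_of_ne hk, map_zero]
    · intro h; exact absurd (Finset.mem_univ j) h
  have hPiTapp : ∀ (v : 𝒱) (j : Fin J), PiT v j = LinearMap.adjoint (P j) v := by
    intro v j; rw [hPiT]; rfl
  -- key intertwining identity
  have hDA : ∀ (j a b : Fin J) (h : V b →ₗ[ℝ] V a),
      blk j j (R j) * ((PiT ∘ₗ A ∘ₗ Pi) * blk a b h) = blk j b (R j ∘ₗ Ablk j a ∘ₗ h) := by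
    intro j a b h
    apply LinearMap.ext; intro x
    show blk j j (R j) ((PiT ∘ₗ A ∘ₗ Pi) (blk a b h x)) = _
    rw [blk_apply, blk_apply, blk_apply]
    simp only [LinearMap.comp_apply]
    rw [hPiSingle, hPiTapp, hAblk]
    rfl
  -- T in terms of blocks
  have hTD : ∀ (j : Fin J) (w : 𝒱), T j w = Pi (blk j j (R j) (PiT (A w))) := by
    intro j w
    rw [blk_apply, hPiSingle, hPiTapp, hT]
    rfl
  -- main induction
  have key : ∀ (n : ℕ) (hn : n ≤ J) (v : 𝒱),
      (List.ofFn fun t : Fin n => (1 : 𝒱 →ₗ[ℝ] 𝒱) - T (Fin.castLE hn t.rev)).prod v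
        = v - Pi (Ysum Ablk R n (PiT (A v))) := by
    intro n
    induction n with
    | zero =>
      intro hn v
      simp [Ysum]
    | succ n ih =>
      intro hn v
      have hn' : n ≤ J := Nat.le_of_succ_le hn
      have tail_eq : (List.ofFn fun i : Fin n =>
          (1 : 𝒱 →ₗ[ℝ] 𝒱) - T (Fin.castLE hn i.succ.rev))
          = List.ofFn fun t : Fin n => (1 : 𝒱 →ₗ[ℝ] 𝒱) - T (Fin.castLE hn' t.rev) := by
        congr 1; funext i
        congr 2
        ext
        simp [Fin.rev]
      have head_eq : Fin.castLE hn (0 : Fin (n+1)).rev = ⟨n, hn⟩ := by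
        ext; simp [Fin.rev]
      rw [List.ofFn_succ, List.prod_cons, head_eq, tail_eq, Module.End.mul_apply, ih hn' v,
        Ysum_succ Ablk R (PiT ∘ₗ A ∘ₗ Pi) hDA n hn]
      simp only [LinearMap.sub_apply, Module.End.one_apply, LinearMap.add_apply,
        Module.End.mul_apply, LinearMap.comp_apply, map_sub, map_add]
      rw [hTD, hTD]
      abel
  -- identification of G
  have hGY : G = Ysum Ablk R J := by
    have hset : ∀ s : ℕ, chainSet J J s
        = Finset.univ.filter (fun c : Fin (s+1) → Fin J => StrictMono c) := by
      intro s; ext c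
      simp only [mem_chainSet, Finset.mem_filter, Finset.mem_univ, true_and]
      exact ⟨fun h => h.1, fun h => ⟨h, fun t => (c t).isLt⟩⟩
    have hfin : ∀ s : ℕ,
        (∑ᶠ c : {c : Fin (s+1) → Fin J // StrictMono c}, chainTerm Ablk R s c.val)
          = ∑ c ∈ chainSet J J s, chainTerm Ablk R s c := by
      intro s
      rw [finsum_eq_sum_of_fintype, hset s]
      exact (Finset.sum_subtype _ (by simp) _).symm
    have h0 : (∑ c ∈ chainSet J J 0, chainTerm Ablk R 0 c) = ∑ j : Fin J, blk j j (R j) := by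
      haveI : Unique (Fin (0+1)) := inferInstanceAs (Unique (Fin 1))
      rw [hset 0, Finset.filter_true_of_mem (fun c _ => Subsingleton.strictMono c)]
      exact Fintype.sum_equiv (Equiv.funUnique (Fin 1) (Fin J))
        (fun c => chainTerm Ablk R 0 c) (fun j => blk j j (R j))
        (fun c => by
          simp only [chainTerm_zero]
          rw [show (Equiv.funUnique (Fin 1) (Fin J)) c = c 0 from congrArg c (Subsingleton.elim _ _)])
    rw [hG]
    unfold Ysum
    rcases Nat.eq_zero_or_pos J with hJ | hJ
    · have h1 : Finset.range J = ∅ := by rw [hJ]; rfl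
      have h2 : Finset.Icc 1 (J-1) = ∅ := by rw [hJ]; rfl
      haveI : IsEmpty (Fin J) := by rw [hJ]; infer_instance
      rw [h1, h2, Finset.univ_eq_empty]
      simp
    · have hr : Finset.range J = insert 0 (Finset.Icc 1 (J-1)) := by
        ext m
        simp only [Finset.mem_range, Finset.mem_insert, Finset.mem_Icc]
        omega
      rw [hr, Finset.sum_insert (by simp), pow_zero, one_smul, h0]
      congr 1
      exact Finset.sum_congr rfl (fun s _ => by rw [hfin s])
  -- conclusion
  rintro x ⟨v, rfl⟩
  have hBv : v - Bssc (A v) = (List.ofFn fun t : Fin J => (1 : 𝒱 →ₗ[ℝ] 𝒱) - T t.rev).prod v := by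
    have := congrArg (fun f : 𝒱 →ₗ[ℝ] 𝒱 => f v) hBssc
    simpa using this
  have hkey := key J le_rfl v
  have hlists : (List.ofFn fun t : Fin J => (1 : 𝒱 →ₗ[ℝ] 𝒱) - T (Fin.castLE le_rfl t.rev))
      = List.ofFn fun t : Fin J => (1 : 𝒱 →ₗ[ℝ] 𝒱) - T t.rev := rfl
  rw [hlists] at hkey
  rw [hkey] at hBv
  have h2 : Bssc (A v) = Pi (Ysum Ablk R J (PiT (A v))) := sub_right_injective hBv
  rw [h2, hGY]
  rfl
end

section
/- Under the subspace correction setting with A symmetric positive semidefinite, V = ∑ⱼ Πⱼ Vⱼ, Aⱼ = Πⱼᵗ A Πⱼ, and restricted local solvers Rⱼ : range(Aⱼ) → range(Aⱼ) symmetric positive definite, the parallel subspace correction preconditioner B_PSC = ∑_{j=1}^J Πⱼ Rⱼ Πⱼᵗ satisfies, for all v ∈ range(A), ⟨B_PSC⁻¹ v, v⟩ = inf over φ ∈ null(A) and decompositions vⱼ ∈ range(Aⱼ) with ∑ⱼ Πⱼ vⱼ = v + φ of ∑_{j=1}^J ⟨Rⱼ⁻¹ vⱼ, vⱼ⟩ (where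 B_PSC⁻¹ is understood as the inverse of the compression of B_PSC to range(A)). -/
/-!
With `c := C v`, the decomposition `x j := R j (π_j (P j)† c)`, `π_j` the orthogonal projection
onto `Kj j`, satisfies `⟪Rinv j (x j), z⟫ = ⟪c, P j z⟫`. Since `c ∈ K` and `ker A = Kᗮ`, the cross
term `∑ j, ⟪Rinv j (x j), w j⟫` equals `⟪c, v⟫` for every decomposition `w` of `v` modulo `ker A`,
and `x` is one such decomposition because `∑ j, P j (x j) = Bpsc c` projects to `v`. Hence the
positive quadratic form `∑ j, ⟪Rinv j (w j), w j⟫` attains its minimum `⟪c, v⟫` at `x`.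
-/

open scoped RealInnerProductSpace

namespace LinearMap

theorem IsPositive.of_comp_eq_id {𝕜 E : Type*} [RCLike 𝕜] [NormedAddCommGroup E]
    [InnerProductSpace 𝕜 E] {T S : E →ₗ[𝕜] E} (hT : T.IsPositive) (h : T ∘ₗ S = LinearMap.id) :
    S.IsPositive := by
  have hTS : ∀ x, T (S x) = x := fun x => LinearMap.congr_fun h x
  refine (isPositive_iff S).mpr ⟨fun x y => ?_, fun x => ?_⟩
  · calc inner 𝕜 (S x) y = inner 𝕜 (S x) (T (S y)) := by rw [hTS]
      _ = inner 𝕜 (T (S x)) (S y) := (hT.isSymmetric _ _).symm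
      _ = inner 𝕜 x (S y) := by rw [hTS]
  · simpa only [hTS] using hT.inner_nonneg_right (S x)

variable {E : Type*} [NormedAddCommGroup E] [InnerProductSpace ℝ E]

theorem IsSymmetric.inner_map_sub_sub {T : E →ₗ[ℝ] E} (hT : T.IsSymmetric) (x y : E) :
    ⟪T (x - y), x - y⟫ = ⟪T x, x⟫ - 2 * ⟪T x, y⟫ + ⟪T y, y⟫ := by
  have hyx : ⟪T y, x⟫ = ⟪T x, y⟫ := by rw [hT, real_inner_comm]
  simp only [map_sub, inner_sub_left, inner_sub_right, hyx]
  ring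

end LinearMap

theorem sum_inner_map_self_le_of_sum_inner_eq {ι : Type*} [Fintype ι] {W : ι → Type*}
    [∀ i, NormedAddCommGroup (W i)] [∀ i, InnerProductSpace ℝ (W i)]
    {S : ∀ i, W i →ₗ[ℝ] W i} (hS : ∀ i, (S i).IsPositive) {x w : ∀ i, W i}
    (h : ∑ i, ⟪S i (x i), w i⟫ = ∑ i, ⟪S i (x i), x i⟫) :
    ∑ i, ⟪S i (x i), x i⟫ ≤ ∑ i, ⟪S i (w i), w i⟫ := by
  have hdiff : 0 ≤ ∑ i, ⟪S i (w i - x i), w i - x i⟫ :=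
    Finset.sum_nonneg fun i _ => (hS i).inner_nonneg_left _
  simp only [fun i => (hS i).isSymmetric.inner_map_sub_sub (w i) (x i),
    Finset.sum_add_distrib, Finset.sum_sub_distrib, ← Finset.mul_sum] at hdiff
  have hsym : ∑ i, ⟪S i (w i), x i⟫ = ∑ i, ⟪S i (x i), w i⟫ :=
    Finset.sum_congr rfl fun i _ => by rw [(hS i).isSymmetric, real_inner_comm]
  linarith

theorem stmt_15_general
    {J : ℕ} {V : Fin J → Type*} [∀ j, NormedAddCommGroup (V j)]
    [∀ j, InnerProductSpace ℝ (V j)] [∀ j, FiniteDimensional ℝ (V j)]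
    {𝒱 : Type*} [NormedAddCommGroup 𝒱] [InnerProductSpace ℝ 𝒱] [FiniteDimensional ℝ 𝒱]
    (A : 𝒱 →ₗ[ℝ] 𝒱) (hAsym : A.IsSymmetric)
    (P : ∀ j : Fin J, V j →ₗ[ℝ] 𝒱)
    (Kj : ∀ j : Fin J, Submodule ℝ (V j))
    (R : ∀ j : Fin J, Kj j →ₗ[ℝ] Kj j)
    (hRsym : ∀ j, (R j).IsSymmetric) (hRpos : ∀ j, ∀ x : Kj j, x ≠ 0 → 0 < ⟪R j x, x⟫)
    (Rinv : ∀ j : Fin J, Kj j →ₗ[ℝ] Kj j)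
    (hR1 : ∀ j, R j ∘ₗ Rinv j = LinearMap.id) (hR2 : ∀ j, Rinv j ∘ₗ R j = LinearMap.id)
    (Bpsc : 𝒱 →ₗ[ℝ] 𝒱)
    (hBpsc : Bpsc = ∑ j : Fin J,
      P j ∘ₗ (Kj j).subtype ∘ₗ R j ∘ₗ (Submodule.orthogonalProjection (Kj j)).toLinearMap ∘ₗ
        LinearMap.adjoint (P j))
    (K : Submodule ℝ 𝒱) (hK : K = LinearMap.range A)
    (C : K →ₗ[ℝ] K)
    (hC1 : ((Submodule.orthogonalProjection K).toLinearMap ∘ₗ Bpsc ∘ₗ K.subtype) ∘ₗ C = LinearMap.id) :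
    ∀ v : K, ⟪C v, v⟫ =
      sInf {x : ℝ | ∃ φ ∈ LinearMap.ker A, ∃ w : ∀ j, Kj j,
        (∑ j : Fin J, P j ((w j : V j))) = (v : 𝒱) + φ ∧
        x = ∑ j : Fin J, ⟪Rinv j (w j), w j⟫} := by
  intro v
  set c : 𝒱 := ((C v : K) : 𝒱)
  set x : ∀ j, Kj j := fun j =>
    R j (Submodule.orthogonalProjectionOnto (Kj j) (LinearMap.adjoint (P j) c))
  have hker : LinearMap.ker A = Kᗮ := by rw [hK, hAsym.orthogonal_range]
  have hBx : ∑ j, P j (x j : V j) = Bpsc c := by simp [hBpsc, x, LinearMap.sum_apply]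
  have hBc : Bpsc c - v ∈ Kᗮ := by
    have hv : Submodule.orthogonalProjectionOnto K (Bpsc c) = v := LinearMap.congr_fun hC1 v
    simpa [Submodule.starProjection_apply, hv] using
      Submodule.sub_starProjection_mem_orthogonal (K := K) (Bpsc c)
  have hRinv : ∀ j, (Rinv j).IsPositive := fun j => by
    refine (LinearMap.isPositive_iff _).mpr ⟨hRsym j, fun y => ?_⟩ |>.of_comp_eq_id (hR1 j)
    rcases eq_or_ne y 0 with rfl | hy
    · simp
    · exact (hRpos j y hy).le
  have hx : ∀ j (z : Kj j), ⟪Rinv j (x j), z⟫ = ⟪c, P j z⟫ := fun j z => by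
    rw [show Rinv j (x j) = _ from LinearMap.congr_fun (hR2 j) _, LinearMap.id_apply,
      Submodule.inner_orthogonalProjectionOnto_eq_of_mem_right, LinearMap.adjoint_inner_left]
  have hcross : ∀ w : ∀ j, Kj j, ∑ j, (P j (w j : V j)) - v ∈ Kᗮ →
      ∑ j, ⟪Rinv j (x j), w j⟫ = ⟪c, v⟫ := fun w hw => by
    rw [Finset.sum_congr rfl fun j _ => hx j (w j), ← inner_sum, ← sub_eq_zero, ← inner_sub_right]
    exact Submodule.inner_right_of_mem_orthogonal (C v).2 hw
  have hxv : ∑ j, ⟪Rinv j (x j), x j⟫ = ⟪C v, v⟫ := hcross x (hBx ▸ hBc)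
  symm
  refine IsLeast.csInf_eq ⟨⟨Bpsc c - v, hker ▸ hBc, x, by rw [hBx]; abel, hxv.symm⟩, ?_⟩
  rintro _ ⟨φ, hφ, w, hw, rfl⟩
  rw [← hxv]
  refine sum_inner_map_self_le_of_sum_inner_eq hRinv ((hcross w ?_).trans hxv.symm)
  rw [hw, add_sub_cancel_left]
  exact hker ▸ hφ

theorem stmt_15
    {J : ℕ} {V : Fin J → Type*} [∀ j, NormedAddCommGroup (V j)]
    [∀ j, InnerProductSpace ℝ (V j)] [∀ j, FiniteDimensional ℝ (V j)]
    {𝒱 : Type*} [NormedAddCommGroup 𝒱] [InnerProductSpace ℝ 𝒱] [FiniteDimensional ℝ 𝒱]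
    (A : 𝒱 →ₗ[ℝ] 𝒱) (hAsym : A.IsSymmetric) (hApos : ∀ v : 𝒱, 0 ≤ ⟪A v, v⟫)
    (P : ∀ j : Fin J, V j →ₗ[ℝ] 𝒱)
    (hdecomp : ∀ v : 𝒱, ∃ w : ∀ j, V j, ∑ j : Fin J, P j (w j) = v)
    (Kj : ∀ j : Fin J, Submodule ℝ (V j))
    (hKj : ∀ j, Kj j = LinearMap.range (LinearMap.adjoint (P j) ∘ₗ A ∘ₗ P j))
    (R : ∀ j : Fin J, Kj j →ₗ[ℝ] Kj j)
    (hRsym : ∀ j, (R j).IsSymmetric) (hRpos : ∀ j, ∀ x : Kj j, x ≠ 0 → 0 < ⟪R j x, x⟫)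
    (Rinv : ∀ j : Fin J, Kj j →ₗ[ℝ] Kj j)
    (hR1 : ∀ j, R j ∘ₗ Rinv j = LinearMap.id) (hR2 : ∀ j, Rinv j ∘ₗ R j = LinearMap.id)
    (Bpsc : 𝒱 →ₗ[ℝ] 𝒱)
    (hBpsc : Bpsc = ∑ j : Fin J,
      P j ∘ₗ (Kj j).subtype ∘ₗ R j ∘ₗ (Submodule.orthogonalProjection (Kj j)).toLinearMap ∘ₗ
        LinearMap.adjoint (P j))
    (K : Submodule ℝ 𝒱) (hK : K = LinearMap.range A)
    (C : K →ₗ[ℝ] K)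
    (hC1 : ((Submodule.orthogonalProjection K).toLinearMap ∘ₗ Bpsc ∘ₗ K.subtype) ∘ₗ C = LinearMap.id)
    (hC2 : C ∘ₗ ((Submodule.orthogonalProjection K).toLinearMap ∘ₗ Bpsc ∘ₗ K.subtype) = LinearMap.id) :
    ∀ v : K, ⟪C v, v⟫ =
      sInf {x : ℝ | ∃ φ ∈ LinearMap.ker A, ∃ w : ∀ j, Kj j,
        (∑ j : Fin J, P j ((w j : V j))) = (v : 𝒱) + φ ∧
        x = ∑ j : Fin J, ⟪Rinv j (w j), w j⟫} :=
  stmt_15_general A hAsym P Kj R hRsym hRpos Rinv hR1 hR2 Bpsc hBpsc K hK C hC1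
end

section
/- Under the subspace correction setting with A symmetric positive definite, exact local solvers Rⱼ = Aⱼ⁻¹ (assuming each Aⱼ = Πⱼᵗ A Πⱼ is SPD), and Pⱼ : V → Vⱼ the A-orthogonal-type operator defined by ⟨Pⱼ v, vⱼ⟩_{Aⱼ} = ⟨v, Πⱼ vⱼ⟩_A, the successive subspace correction error propagator satisfies the Xu–Zikatanov identity: ‖(I − T_J)⋯(I − T₁)‖_A² = 1 − 1/(1 + c₀), where Tⱼ = Πⱼ Aⱼ⁻¹ Πⱼᵗ A and c₀ = sup_{‖v‖_A = 1} inf_{∑ Πⱼvⱼ = v} ∑_{i=1}^J ‖ Pᵢ ∑_{j>i} Πⱼ vⱼ ‖_{Aᵢ}². -/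
/-!
Write `E_k = (1 - T_{k-1}) ⋯ (1 - T_0)` for the partial sweeps, so that `E = E_J`. As every `T_k`
is an orthogonal projection, `‖w‖² - ‖E w‖² = ∑ₖ ‖T_k E_k w‖²`. A decomposition `v = ∑ⱼ vⱼ` is
handled through its tails `R_i = ∑_{j ≥ i} vⱼ`: telescoping gives `‖v‖² = ∑ᵢ ⟪T_i R_i, T_i E_i v⟫`
and `∑ᵢ ‖T_i R_i‖² = ‖v‖² + cost`, where `cost = ∑ᵢ ‖T_i R_{i+1}‖²`, so by Cauchy–Schwarz
`‖v‖⁴ ≤ (‖v‖² + cost) (‖v‖² - ‖E v‖²)`.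
Conversely, for `v = (1 - E* E) w` the tails `q_k = T_k E_k w + (1 - T_k) q_{k+1}` form a
decomposition with `‖v‖² + cost = ‖w‖² - ‖E w‖² = ⟪v, w⟫`. Comparing both bounds at a unit vector
where `‖E v‖` is maximal gives `1 + c₀ = 1 / (1 - ‖E‖²)`.

The operator setting is the special case of `𝒱` with the energy inner product `⟪A u, v⟫`, for which
`T_j = Π_j A_j⁻¹ Π_jᵗ A` is the orthogonal projection onto `Π_j V_j`.
-/

open scoped RealInnerProductSpace
open Finset

section OrthogonalProjections

variable {E : Type*} [NormedAddCommGroup E] [InnerProductSpace ℝ E]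

theorem sq_sum_inner_le {ι : Type*} (s : Finset ι) (f g : ι → E) :
    (∑ i ∈ s, ⟪f i, g i⟫) ^ 2 ≤ (∑ i ∈ s, ‖f i‖ ^ 2) * ∑ i ∈ s, ‖g i‖ ^ 2 := by
  have h : |∑ i ∈ s, ⟪f i, g i⟫| ≤ ∑ i ∈ s, ‖f i‖ * ‖g i‖ :=
    (abs_sum_le_sum_abs _ _).trans (sum_le_sum fun i _ => abs_real_inner_le_norm _ _)
  calc (∑ i ∈ s, ⟪f i, g i⟫) ^ 2 = |∑ i ∈ s, ⟪f i, g i⟫| ^ 2 := (sq_abs _).symm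
    _ ≤ (∑ i ∈ s, ‖f i‖ * ‖g i‖) ^ 2 := pow_le_pow_left₀ (abs_nonneg _) h 2
    _ ≤ _ := sum_mul_sq_le_sq_mul_sq _ _ _

theorem IsIdempotentElem.apply_apply {R M : Type*} [Semiring R] [AddCommMonoid M] [Module R M]
    {p : M →ₗ[R] M} (hp : IsIdempotentElem p) (x : M) : p (p x) = p x :=
  LinearMap.congr_fun hp.eq x

theorem IsIdempotentElem.sub_apply_eq_of_sub_mem_range {R M : Type*} [Ring R] [AddCommGroup M]
    [Module R M] {p : M →ₗ[R] M} (hp : IsIdempotentElem p) {r r' : M}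
    (h : r - r' ∈ LinearMap.range p) : r - p r = r' - p r' := by
  rw [LinearMap.IsIdempotentElem.mem_range_iff hp, map_sub] at h
  rw [sub_eq_sub_iff_sub_eq_sub, h]

namespace LinearMap.IsSymmetricProjection

variable {p : E →ₗ[ℝ] E}

theorem zero : (0 : E →ₗ[ℝ] E).IsSymmetricProjection :=
  ⟨IsIdempotentElem.zero, LinearMap.IsSymmetric.zero⟩

theorem inner_eq_inner_add_inner (hp : p.IsSymmetricProjection) (x y : E) :
    ⟪x, y⟫ = ⟪p x, p y⟫ + ⟪x - p x, y - p y⟫ := by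
  have hxy : ⟪p x, y⟫ = ⟪x, p y⟫ := hp.isSymmetric x y
  have hpp : ⟪p x, p y⟫ = ⟪x, p y⟫ := by rw [hp.isSymmetric, hp.isIdempotentElem.apply_apply]
  simp only [inner_sub_left, inner_sub_right]
  linarith

theorem inner_sub_inner_of_sub_mem_range (hp : p.IsSymmetricProjection) {r r' : E}
    (h : r - r' ∈ range p) (z : E) : ⟪r, z⟫ - ⟪r', z - p z⟫ = ⟪p r, p z⟫ := by
  have hr' : ⟪r', z - p z⟫ = ⟪r' - p r', z - p z⟫ := by
    rw [inner_sub_left, hp.isSymmetric, map_sub, hp.isIdempotentElem.apply_apply, sub_self,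
      inner_zero_right, sub_zero]
  rw [hp.inner_eq_inner_add_inner r z, hr', hp.isIdempotentElem.sub_apply_eq_of_sub_mem_range h,
    add_sub_cancel_right]

theorem norm_sq_sub_norm_sq_of_sub_mem_range (hp : p.IsSymmetricProjection) {r r' : E}
    (h : r - r' ∈ range p) : ‖r‖ ^ 2 - ‖r'‖ ^ 2 = ‖p r‖ ^ 2 - ‖p r'‖ ^ 2 := by
  simp only [← real_inner_self_eq_norm_sq]
  rw [hp.inner_eq_inner_add_inner r r, hp.inner_eq_inner_add_inner r' r',
    hp.isIdempotentElem.sub_apply_eq_of_sub_mem_range h]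
  ring

end LinearMap.IsSymmetricProjection

section Sweep

variable (T : ℕ → E →ₗ[ℝ] E)

def sweep : ℕ → E →ₗ[ℝ] E
  | 0 => 1
  | n + 1 => (1 - T n) * sweep n

/-- The tails of the decomposition of `(1 - E* E) w` that attains the infimal cost, where
`E = sweep T n`. -/
def optimalTail (n : ℕ) (w : E) (k : ℕ) : E :=
  if k < n then T k (sweep T k w) + (1 - T k) (optimalTail n w (k + 1)) else 0
termination_by n - k

variable {T}

@[simp]
theorem sweep_zero_apply (w : E) : sweep T 0 w = w := rfl

theorem sweep_succ_apply (n : ℕ) (w : E) :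
    sweep T (n + 1) w = sweep T n w - T n (sweep T n w) := rfl

theorem optimalTail_of_le {n k : ℕ} (w : E) (h : n ≤ k) : optimalTail T n w k = 0 := by
  rw [optimalTail, if_neg (not_lt.2 h)]

theorem optimalTail_of_lt {n k : ℕ} (w : E) (h : k < n) :
    optimalTail T n w k =
      T k (sweep T k w) + (optimalTail T n w (k + 1) - T k (optimalTail T n w (k + 1))) := by
  rw [optimalTail, if_pos h]
  rfl

theorem optimalTail_sub_mem_range {n k : ℕ} (w : E) (h : k < n) :
    optimalTail T n w k - optimalTail T n w (k + 1) ∈ (T k).range := by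
  rw [optimalTail_of_lt w h]
  exact ⟨sweep T k w - optimalTail T n w (k + 1), by rw [map_sub]; abel⟩

variable (hT : ∀ k, (T k).IsSymmetricProjection)
include hT

theorem inner_sub_inner_sweep (n : ℕ) (w z : E) :
    ⟪w, z⟫ - ⟪sweep T n w, sweep T n z⟫ =
      ∑ k ∈ range n, ⟪T k (sweep T k w), T k (sweep T k z)⟫ := by
  induction n with
  | zero => simp
  | succ n ih =>
    rw [sum_range_succ, ← ih, sweep_succ_apply, sweep_succ_apply,
      (hT n).inner_eq_inner_add_inner (sweep T n w)]
    ring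

theorem norm_sq_sub_norm_sq_sweep (n : ℕ) (w : E) :
    ‖w‖ ^ 2 - ‖sweep T n w‖ ^ 2 = ∑ k ∈ range n, ‖T k (sweep T k w)‖ ^ 2 := by
  simpa only [real_inner_self_eq_norm_sq] using inner_sub_inner_sweep hT n w w

section Tails

variable {n : ℕ} {R : ℕ → E} (hR : ∀ i < n, R i - R (i + 1) ∈ (T i).range)
include hR

theorem inner_sub_inner_sweep_of_sub_mem_range (z : E) :
    ⟪R 0, z⟫ - ⟪R n, sweep T n z⟫ = ∑ i ∈ range n, ⟪T i (R i), T i (sweep T i z)⟫ := by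
  rw [show ⟪R 0, z⟫ = ⟪R 0, sweep T 0 z⟫ from rfl, ← sum_range_sub' (fun i => ⟪R i, sweep T i z⟫)]
  refine sum_congr rfl fun i hi => ?_
  rw [sweep_succ_apply]
  exact (hT i).inner_sub_inner_of_sub_mem_range (hR i (mem_range.1 hi)) _

theorem norm_sq_sub_norm_sq_of_sub_mem_range :
    ‖R 0‖ ^ 2 - ‖R n‖ ^ 2 = ∑ i ∈ range n, (‖T i (R i)‖ ^ 2 - ‖T i (R (i + 1))‖ ^ 2) := by
  rw [← sum_range_sub' (fun i => ‖R i‖ ^ 2)]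
  exact sum_congr rfl fun i hi =>
    (hT i).norm_sq_sub_norm_sq_of_sub_mem_range (hR i (mem_range.1 hi))

theorem pow_four_le_of_sub_mem_range (hn : R n = 0) :
    ‖R 0‖ ^ 4 ≤ (‖R 0‖ ^ 2 + ∑ i ∈ range n, ‖T i (R (i + 1))‖ ^ 2) *
      (‖R 0‖ ^ 2 - ‖sweep T n (R 0)‖ ^ 2) := by
  have hinner := inner_sub_inner_sweep_of_sub_mem_range hT hR (R 0)
  have hnorm := norm_sq_sub_norm_sq_of_sub_mem_range hT hR
  rw [hn, inner_zero_left, sub_zero, real_inner_self_eq_norm_sq] at hinner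
  rw [hn, norm_zero, sum_sub_distrib] at hnorm
  calc ‖R 0‖ ^ 4 = (‖R 0‖ ^ 2) ^ 2 := by ring
    _ ≤ _ := hinner ▸ sq_sum_inner_le _ _ _
    _ = _ := by rw [norm_sq_sub_norm_sq_sweep hT]; congr 1; linarith

end Tails

theorem apply_optimalTail {n k : ℕ} (w : E) (h : k < n) :
    T k (optimalTail T n w k) = T k (sweep T k w) := by
  rw [optimalTail_of_lt w h, map_add, map_sub, (hT k).isIdempotentElem.apply_apply,
    (hT k).isIdempotentElem.apply_apply]
  abel

theorem inner_optimalTail_zero (n : ℕ) (w z : E) :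
    ⟪optimalTail T n w 0, z⟫ = ⟪w, z⟫ - ⟪sweep T n w, sweep T n z⟫ := by
  have h := inner_sub_inner_sweep_of_sub_mem_range hT
    (fun i hi => optimalTail_sub_mem_range (T := T) (n := n) w hi) z
  rw [optimalTail_of_le w le_rfl, inner_zero_left, sub_zero] at h
  rw [h, inner_sub_inner_sweep hT]
  exact sum_congr rfl fun i hi => by rw [apply_optimalTail hT w (mem_range.1 hi)]

theorem norm_sq_optimalTail_zero_add (n : ℕ) (w : E) :
    ‖optimalTail T n w 0‖ ^ 2 + ∑ i ∈ range n, ‖T i (optimalTail T n w (i + 1))‖ ^ 2 =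
      ‖w‖ ^ 2 - ‖sweep T n w‖ ^ 2 := by
  have h := norm_sq_sub_norm_sq_of_sub_mem_range hT
    (fun i hi => optimalTail_sub_mem_range (T := T) (n := n) w hi)
  rw [optimalTail_of_le w le_rfl, norm_zero, sum_sub_distrib] at h
  have hsum : ∑ i ∈ range n, ‖T i (optimalTail T n w i)‖ ^ 2 =
      ∑ i ∈ range n, ‖T i (sweep T i w)‖ ^ 2 :=
    sum_congr rfl fun i hi => by rw [apply_optimalTail hT w (mem_range.1 hi)]
  rw [norm_sq_sub_norm_sq_sweep hT, ← hsum]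
  linarith

end Sweep

section FinIndexed

open Function

variable {J : ℕ}

theorem Fin.sum_Ioi_eq_sum_Ioo {M : Type*} [AddCommMonoid M] (g : ℕ → M) (i : Fin J) :
    ∑ j ∈ Ioi i, g j = ∑ k ∈ Ioo (i : ℕ) J, g k := by
  rw [← Fin.map_valEmbedding_Ioi, sum_map, Fin.valEmbedding_apply]

theorem Fin.sum_Ioi_eq_sum_Ioo_extend {M : Type*} [AddCommMonoid M] (y : Fin J → M)
    (i : Fin J) : ∑ j ∈ Ioi i, y j = ∑ k ∈ Ioo (i : ℕ) J, extend Fin.val y 0 k := by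
  simp_rw [← Fin.sum_Ioi_eq_sum_Ioo, Fin.val_injective.extend_apply]

theorem Fin.sum_univ_eq_sum_range_extend {M : Type*} [AddCommMonoid M] (y : Fin J → M) :
    ∑ j, y j = ∑ k ∈ range J, extend Fin.val y 0 k := by
  simp_rw [← Fin.sum_univ_eq_sum_range, Fin.val_injective.extend_apply]

theorem Fin.sum_sub_succ {M : Type*} [AddCommGroup M] (R : ℕ → M) (hRJ : R J = 0) :
    ∑ j : Fin J, (R j - R (j + 1)) = R 0 := by
  rw [Fin.sum_univ_eq_sum_range (fun k => R k - R (k + 1)), sum_range_sub', hRJ, sub_zero]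

variable (T : Fin J → E →ₗ[ℝ] E)

/-- `(1 - T (J-1)) ⋯ (1 - T 0)`: the correction with `T 0` is applied first. -/
def sscError : E →ₗ[ℝ] E := (List.ofFn fun t : Fin J => 1 - T t.rev).prod

def decompositionCost (y : Fin J → E) : ℝ := ∑ i, ‖T i (∑ j ∈ Ioi i, y j)‖ ^ 2

noncomputable def infDecompositionCost (v : E) : ℝ :=
  sInf (decompositionCost T '' {y | (∀ j, y j ∈ (T j).range) ∧ ∑ j, y j = v})

theorem list_prod_ofFn_eq_sweep (S : ℕ → E →ₗ[ℝ] E) (n : ℕ) :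
    (List.ofFn fun t : Fin n => 1 - S t.rev).prod = sweep S n := by
  induction n with
  | zero => rfl
  | succ n ih =>
    rw [List.ofFn_succ, List.prod_cons, sweep, ← ih]
    simp only [Fin.rev_zero, Fin.val_last, Fin.rev_succ, Fin.val_castSucc]

theorem sscError_eq_sweep : sscError T = sweep (extend Fin.val T 0) J := by
  rw [sscError, ← list_prod_ofFn_eq_sweep]
  simp_rw [Fin.val_injective.extend_apply]

theorem sscError_conj {H : Type*} [NormedAddCommGroup H] [InnerProductSpace ℝ H]
    (e : E ≃ₗ[ℝ] H) : sscError (fun j => e.conj (T j)) = e.conj (sscError T) := by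
  have h (f : E →ₗ[ℝ] E) : e.conj f = e.conjRingEquiv f := LinearMap.ext fun x => by
    simp [LinearEquiv.conj_apply]
  simp only [sscError, h, map_list_prod, List.map_ofFn, Function.comp_def, map_sub, map_one]

theorem decompositionCost_eq_sum_range (y : Fin J → E) :
    decompositionCost T y = ∑ i ∈ range J,
      ‖extend Fin.val T 0 i (∑ k ∈ Ico (i + 1) J, extend Fin.val y 0 k)‖ ^ 2 := by
  simp_rw [decompositionCost, Fin.sum_Ioi_eq_sum_Ioo_extend, ← Ico_add_one_left_eq_Ioo]
  rw [← Fin.sum_univ_eq_sum_range]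
  simp_rw [Fin.val_injective.extend_apply]

theorem decompositionCost_sub_succ (R : ℕ → E) (hRJ : R J = 0) :
    decompositionCost T (fun j => R j - R (j + 1)) =
      ∑ i ∈ range J, ‖extend Fin.val T 0 i (R (i + 1))‖ ^ 2 := by
  have htail (i : Fin J) : ∑ j ∈ Ioi i, (R j - R (j + 1)) = R (i + 1) := by
    rw [Fin.sum_Ioi_eq_sum_Ioo (fun k => R k - R (k + 1)), ← Ico_add_one_left_eq_Ioo,
      ← neg_inj, ← sum_neg_distrib]
    simp_rw [neg_sub]
    rw [sum_Ico_sub R (show (i : ℕ) + 1 ≤ J from i.isLt), hRJ, zero_sub]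
  simp_rw [decompositionCost, htail]
  rw [← Fin.sum_univ_eq_sum_range (fun i => ‖extend Fin.val T 0 i (R (i + 1))‖ ^ 2)]
  simp_rw [Fin.val_injective.extend_apply]

variable {T}

theorem isSymmetricProjection_extend (hT : ∀ j, (T j).IsSymmetricProjection) (k : ℕ) :
    (extend Fin.val T 0 k).IsSymmetricProjection := by
  by_cases hk : ∃ j : Fin J, j.val = k
  · obtain ⟨j, rfl⟩ := hk
    rw [Fin.val_injective.extend_apply]
    exact hT j
  · rw [extend_apply' _ _ _ hk]
    exact .zero

theorem extend_mem_range_extend {y : Fin J → E} (hy : ∀ j, y j ∈ (T j).range) (k : ℕ) :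
    extend Fin.val y 0 k ∈ (extend Fin.val T 0 k).range := by
  by_cases hk : ∃ j : Fin J, j.val = k
  · obtain ⟨j, rfl⟩ := hk
    simpa only [Fin.val_injective.extend_apply] using hy j
  · simp only [extend_apply' _ _ _ hk, Pi.zero_apply, Submodule.zero_mem]

theorem sub_succ_mem_range {R : ℕ → E}
    (hR : ∀ i < J, R i - R (i + 1) ∈ (extend Fin.val T 0 i).range) (j : Fin J) :
    R j - R (j + 1) ∈ (T j).range := by
  simpa only [Fin.val_injective.extend_apply] using hR j j.isLt

theorem pow_four_le_decompositionCost (hT : ∀ j, (T j).IsSymmetricProjection)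
    {y : Fin J → E} (hy : ∀ j, y j ∈ (T j).range) :
    ‖∑ j, y j‖ ^ 4 ≤ (‖∑ j, y j‖ ^ 2 + decompositionCost T y) *
      (‖∑ j, y j‖ ^ 2 - ‖sscError T (∑ j, y j)‖ ^ 2) := by
  have hR : ∀ i < J, (∑ k ∈ Ico i J, extend Fin.val y 0 k) -
      ∑ k ∈ Ico (i + 1) J, extend Fin.val y 0 k ∈ (extend Fin.val T 0 i).range := by
    intro i hi
    rw [sum_eq_sum_Ico_succ_bot hi, add_sub_cancel_right]
    exact extend_mem_range_extend hy i
  have h := pow_four_le_of_sub_mem_range (isSymmetricProjection_extend hT) hR (by simp)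
  rwa [← range_eq_Ico, ← Fin.sum_univ_eq_sum_range_extend, ← decompositionCost_eq_sum_range,
    ← sscError_eq_sweep] at h

theorem exists_decomposition_of_sscError [FiniteDimensional ℝ E]
    (hT : ∀ j, (T j).IsSymmetricProjection) (w : E) :
    ∃ y : Fin J → E, (∀ j, y j ∈ (T j).range) ∧
      ∑ j, y j = w - LinearMap.adjoint (sscError T) (sscError T w) ∧
      ‖∑ j, y j‖ ^ 2 + decompositionCost T y = ‖w‖ ^ 2 - ‖sscError T w‖ ^ 2 := by
  have hT' := isSymmetricProjection_extend hT
  set q := optimalTail (extend Fin.val T 0) J w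
  have hqJ : q J = 0 := optimalTail_of_le w le_rfl
  have hq0 : q 0 = w - LinearMap.adjoint (sscError T) (sscError T w) := by
    refine ext_inner_right ℝ fun z => ?_
    rw [inner_optimalTail_zero hT', inner_sub_left, LinearMap.adjoint_inner_left,
      sscError_eq_sweep]
  refine ⟨fun j => q j - q (j + 1), sub_succ_mem_range fun i hi => optimalTail_sub_mem_range w hi,
    by rw [Fin.sum_sub_succ q hqJ, hq0], ?_⟩
  rw [Fin.sum_sub_succ q hqJ, decompositionCost_sub_succ T q hqJ, sscError_eq_sweep]
  exact norm_sq_optimalTail_zero_add hT' J w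

end FinIndexed

theorem lt_of_pow_four_le_mul {a b c : ℝ} (ha : 0 < a) (hc : 0 ≤ c)
    (h : a ^ 4 ≤ (a ^ 2 + c) * (a ^ 2 - b ^ 2)) : b < a := by
  have hpos : 0 < a ^ 2 - b ^ 2 :=
    pos_of_mul_pos_right ((pow_pos ha 4).trans_le h) (by positivity)
  exact lt_of_pow_lt_pow_left₀ 2 ha.le (by linarith)

section Variational

open Metric Set

variable {M : E →ₗ[ℝ] E} {D : E → Set ℝ}

theorem surjective_one_sub_adjoint_mul_self [FiniteDimensional ℝ E]
    (hM : ∀ u ≠ 0, ‖M u‖ < ‖u‖) :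
    Function.Surjective ((1 : E →ₗ[ℝ] E) - LinearMap.adjoint M * M) := by
  refine LinearMap.injective_iff_surjective.1 (LinearMap.ker_eq_bot.1 ?_)
  refine LinearMap.ker_eq_bot'.2 fun u hu => ?_
  by_contra hu0
  have h : ⟪((1 : E →ₗ[ℝ] E) - LinearMap.adjoint M * M) u, u⟫ = ‖u‖ ^ 2 - ‖M u‖ ^ 2 := by
    simp [inner_sub_left, LinearMap.adjoint_inner_left]
  rw [hu, inner_zero_left] at h
  have := hM u hu0
  nlinarith [norm_nonneg (M u)]

theorem sInf_le_of_norm_apply_le [FiniteDimensional ℝ E] (hD0 : ∀ v, ∀ c ∈ D v, 0 ≤ c)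
    (hupper : ∀ w, ∃ c ∈ D (w - LinearMap.adjoint M (M w)),
      ‖w - LinearMap.adjoint M (M w)‖ ^ 2 + c = ‖w‖ ^ 2 - ‖M w‖ ^ 2)
    {σ : ℝ} (hσ : σ ^ 2 < 1) (hMσ : ∀ u, ‖M u‖ ≤ σ * ‖u‖) (hM : ∀ u ≠ 0, ‖M u‖ < ‖u‖)
    {v : E} (hv : ‖v‖ = 1) : sInf (D v) ≤ 1 / (1 - σ ^ 2) - 1 := by
  obtain ⟨w, rfl⟩ := surjective_one_sub_adjoint_mul_self hM v
  simp only [LinearMap.sub_apply, Module.End.one_apply, Module.End.mul_apply] at hv ⊢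
  obtain ⟨c, hc, hcw⟩ := hupper w
  have hinner : ⟪w - LinearMap.adjoint M (M w), w⟫ = ‖w‖ ^ 2 - ‖M w‖ ^ 2 := by
    rw [inner_sub_left, LinearMap.adjoint_inner_left, real_inner_self_eq_norm_sq,
      real_inner_self_eq_norm_sq]
  have hcs := real_inner_le_norm (w - LinearMap.adjoint M (M w)) w
  have hMw : ‖M w‖ ^ 2 ≤ σ ^ 2 * ‖w‖ ^ 2 := by
    rw [← mul_pow]
    exact pow_le_pow_left₀ (norm_nonneg _) (hMσ w) 2
  rw [hv, hinner, one_mul] at hcs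
  rw [hv, one_pow] at hcw
  -- `(1 - σ²) ‖w‖² ≤ ‖w‖² - ‖M w‖² = 1 + c ≤ ‖w‖`
  have hw : ‖w‖ ≤ 1 / (1 - σ ^ 2) := by
    rw [le_div_iff₀ (by linarith)]
    nlinarith [norm_nonneg w]
  exact (csInf_le ⟨0, hD0 _⟩ hc).trans (by linarith)

theorem le_sInf_of_norm_apply_eq (hD : ∀ v, (D v).Nonempty)
    (hlower : ∀ v, ∀ c ∈ D v, ‖v‖ ^ 4 ≤ (‖v‖ ^ 2 + c) * (‖v‖ ^ 2 - ‖M v‖ ^ 2))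
    {σ : ℝ} (hσ : σ ^ 2 < 1) {v : E} (hv : ‖v‖ = 1) (hMv : ‖M v‖ = σ) :
    1 / (1 - σ ^ 2) - 1 ≤ sInf (D v) := by
  refine le_csInf (hD v) fun c hc => ?_
  have h := hlower v c hc
  rw [hv, hMv] at h
  rw [sub_le_iff_le_add, div_le_iff₀ (by linarith)]
  linarith

/-- `D v` stands for the set of costs of the decompositions of `v`. -/
theorem sq_sSup_norm_eq_of_pow_four_le [FiniteDimensional ℝ E] (hD : ∀ v, (D v).Nonempty)
    (hD0 : ∀ v, ∀ c ∈ D v, 0 ≤ c)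
    (hlower : ∀ v, ∀ c ∈ D v, ‖v‖ ^ 4 ≤ (‖v‖ ^ 2 + c) * (‖v‖ ^ 2 - ‖M v‖ ^ 2))
    (hupper : ∀ w, ∃ c ∈ D (w - LinearMap.adjoint M (M w)),
      ‖w - LinearMap.adjoint M (M w)‖ ^ 2 + c = ‖w‖ ^ 2 - ‖M w‖ ^ 2) :
    sSup ((fun v => ‖M v‖) '' sphere 0 1) ^ 2 =
      1 - 1 / (1 + sSup ((fun v => sInf (D v)) '' sphere 0 1)) := by
  rcases subsingleton_or_nontrivial E with hE | hE
  · simp [sphere_eq_empty_of_subsingleton one_ne_zero]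
  have hM (u : E) (hu : u ≠ 0) : ‖M u‖ < ‖u‖ := by
    obtain ⟨c, hc⟩ := hD u
    exact lt_of_pow_four_le_mul (norm_pos_iff.2 hu) (hD0 u c hc) (hlower u c hc)
  obtain ⟨v₀, hv₀, hmax⟩ := (isCompact_sphere (0 : E) 1).exists_isMaxOn
    (NormedSpace.sphere_nonempty.2 zero_le_one) M.continuous_of_finiteDimensional.norm.continuousOn
  have hv₀1 : ‖v₀‖ = 1 := by simpa using hv₀
  have hσ : ‖M v₀‖ ^ 2 < 1 := pow_lt_one₀ (norm_nonneg _)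
    (hv₀1 ▸ hM v₀ (ne_zero_of_norm_ne_zero (hv₀1 ▸ one_ne_zero))) two_ne_zero
  have hsup : IsGreatest ((fun v => ‖M v‖) '' sphere 0 1) ‖M v₀‖ :=
    ⟨mem_image_of_mem _ hv₀, by rintro _ ⟨v, hv, rfl⟩; exact hmax hv⟩
  have hnorm : ‖LinearMap.toContinuousLinearMap M‖ = ‖M v₀‖ := by
    rw [← ContinuousLinearMap.sSup_sphere_eq_norm]
    exact hsup.csSup_eq
  have hMσ (u : E) : ‖M u‖ ≤ ‖M v₀‖ * ‖u‖ :=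
    hnorm ▸ (LinearMap.toContinuousLinearMap M).le_opNorm u
  have hinf : IsGreatest ((fun v => sInf (D v)) '' sphere 0 1) (1 / (1 - ‖M v₀‖ ^ 2) - 1) :=
    ⟨⟨v₀, hv₀, le_antisymm (sInf_le_of_norm_apply_le hD0 hupper hσ hMσ hM hv₀1)
      (le_sInf_of_norm_apply_eq hD hlower hσ hv₀1 rfl)⟩, by
      rintro _ ⟨v, hv, rfl⟩
      exact sInf_le_of_norm_apply_le hD0 hupper hσ hMσ hM (by simpa using hv)⟩
  rw [hsup.csSup_eq, hinf.csSup_eq, add_sub_cancel, one_div_one_div]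
  ring

end Variational

open Metric in
theorem sq_sSup_norm_sscError_eq [FiniteDimensional ℝ E] {J : ℕ} (T : Fin J → E →ₗ[ℝ] E)
    (hT : ∀ j, (T j).IsSymmetricProjection)
    (hspan : ∀ v, ∃ y : Fin J → E, (∀ j, y j ∈ (T j).range) ∧ ∑ j, y j = v) :
    sSup ((fun v => ‖sscError T v‖) '' sphere 0 1) ^ 2 =
      1 - 1 / (1 + sSup (infDecompositionCost T '' sphere 0 1)) := by
  apply sq_sSup_norm_eq_of_pow_four_le
  · intro v
    obtain ⟨y, hy⟩ := hspan v
    exact ⟨_, y, hy, rfl⟩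
  · rintro v _ ⟨y, -, rfl⟩
    exact sum_nonneg fun i _ => by positivity
  · rintro v _ ⟨y, ⟨hy, rfl⟩, rfl⟩
    exact pow_four_le_decompositionCost hT hy
  · intro w
    obtain ⟨y, hy, hsum, hcost⟩ := exists_decomposition_of_sscError hT w
    exact ⟨_, ⟨y, ⟨hy, hsum⟩, rfl⟩, hsum ▸ hcost⟩

end OrthogonalProjections

section EnergySpace

variable {𝒱 : Type*} [NormedAddCommGroup 𝒱] [InnerProductSpace ℝ 𝒱]

def EnergySpace (_A : 𝒱 →ₗ[ℝ] 𝒱) : Type _ := 𝒱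

namespace EnergySpace

variable (A : 𝒱 →ₗ[ℝ] 𝒱)

instance : AddCommGroup (EnergySpace A) := inferInstanceAs (AddCommGroup 𝒱)

instance : Module ℝ (EnergySpace A) := inferInstanceAs (Module ℝ 𝒱)

def equiv : 𝒱 ≃ₗ[ℝ] EnergySpace A := LinearEquiv.refl ℝ 𝒱

variable {A} in
theorem conj_apply_equiv (M : 𝒱 →ₗ[ℝ] 𝒱) (v : 𝒱) :
    (equiv A).conj M (equiv A v) = equiv A (M v) := by
  rw [LinearEquiv.conj_apply_apply, LinearEquiv.symm_apply_apply]

variable [hA : Fact (A.IsSymmetric ∧ ∀ v, v ≠ 0 → 0 < ⟪A v, v⟫)]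

noncomputable instance : NormedAddCommGroup (EnergySpace A) :=
  @InnerProductSpace.Core.toNormedAddCommGroup ℝ (EnergySpace A) _ _ _
    { inner u v := ⟪A ((equiv A).symm u), (equiv A).symm v⟫
      conj_inner_symm u v := by simp only [conj_trivial]; rw [hA.out.1, real_inner_comm]
      re_inner_nonneg u := by
        rcases eq_or_ne ((equiv A).symm u) 0 with h | h
        · simp [h]
        · exact (hA.out.2 _ h).le
      definite u h := by
        by_contra hu
        exact (hA.out.2 ((equiv A).symm u) (by simpa using hu)).ne' h
      add_left := by simp [inner_add_left]
      smul_left := by simp [real_inner_smul_left] }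

noncomputable instance : InnerProductSpace ℝ (EnergySpace A) := InnerProductSpace.ofCore _

instance [FiniteDimensional ℝ 𝒱] : FiniteDimensional ℝ (EnergySpace A) :=
  (equiv A).finiteDimensional

variable {A}

theorem inner_equiv (u v : 𝒱) : ⟪equiv A u, equiv A v⟫ = ⟪A u, v⟫ := rfl

theorem norm_equiv (v : 𝒱) : ‖equiv A v‖ = √⟪A v, v⟫ := by
  rw [norm_eq_sqrt_real_inner, inner_equiv]

theorem norm_sq_equiv (v : 𝒱) : ‖equiv A v‖ ^ 2 = ⟪A v, v⟫ := by
  rw [← real_inner_self_eq_norm_sq, inner_equiv]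

theorem isSymmetricProjection_conj {T : 𝒱 →ₗ[ℝ] 𝒱} (hidem : ∀ v, T (T v) = T v)
    (hsym : ∀ u v, ⟪A (T u), v⟫ = ⟪A u, T v⟫) :
    ((equiv A).conj T).IsSymmetricProjection := by
  refine ⟨LinearMap.ext fun u => ?_, fun u v => ?_⟩
  · simp [LinearEquiv.conj_apply, hidem]
  · obtain ⟨u, rfl⟩ := (equiv A).surjective u
    obtain ⟨v, rfl⟩ := (equiv A).surjective v
    simpa [LinearEquiv.conj_apply, inner_equiv] using hsym u v

open Metric in
theorem setOf_sqrt_eq_image_sphere {f : 𝒱 → ℝ} (g : EnergySpace A → ℝ)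
    (hfg : ∀ v, f v = g (equiv A v)) :
    {y | ∃ v, √⟪A v, v⟫ = 1 ∧ y = f v} = g '' sphere 0 1 := by
  ext y
  simp only [Set.mem_ofPred_eq, Set.mem_image, mem_sphere_zero_iff_norm, hfg, ← norm_equiv]
  exact ⟨fun ⟨v, hv, hy⟩ => ⟨_, hv, hy.symm⟩,
    fun ⟨u, hu, hy⟩ => ⟨(equiv A).symm u, by simpa using hu, by simpa using hy.symm⟩⟩

end EnergySpace

end EnergySpace

section GalerkinProjection

variable {𝒱 W : Type*} [NormedAddCommGroup 𝒱] [InnerProductSpace ℝ 𝒱]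
  [NormedAddCommGroup W] [InnerProductSpace ℝ W]
  {A : 𝒱 →ₗ[ℝ] 𝒱} {P : W →ₗ[ℝ] 𝒱} {Aw Awinv : W →ₗ[ℝ] W} {Q : 𝒱 →ₗ[ℝ] W} {T : 𝒱 →ₗ[ℝ] 𝒱}

theorem galerkin_apply_eq [FiniteDimensional ℝ 𝒱] [FiniteDimensional ℝ W]
    (hinv : Awinv ∘ₗ Aw = LinearMap.id) (hT : T = P ∘ₗ Awinv ∘ₗ LinearMap.adjoint P ∘ₗ A)
    (hQ : ∀ v x, ⟪Aw (Q v), x⟫ = ⟪A v, P x⟫) (v : 𝒱) : T v = P (Q v) := by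
  have hAwQ : Aw (Q v) = LinearMap.adjoint P (A v) :=
    ext_inner_right ℝ fun x => by rw [hQ, LinearMap.adjoint_inner_left]
  rw [hT]
  simp only [LinearMap.coe_comp, Function.comp_apply, ← hAwQ]
  rw [← LinearMap.comp_apply Awinv, hinv, LinearMap.id_apply]

theorem galerkin_apply_map_eq [FiniteDimensional ℝ 𝒱] [FiniteDimensional ℝ W]
    (hAw : Aw = LinearMap.adjoint P ∘ₗ A ∘ₗ P) (hinv : Awinv ∘ₗ Aw = LinearMap.id)
    (hT : T = P ∘ₗ Awinv ∘ₗ LinearMap.adjoint P ∘ₗ A) (x : W) : T (P x) = P x := by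
  rw [hT]
  simp only [LinearMap.coe_comp, Function.comp_apply]
  rw [← LinearMap.comp_apply A P, ← LinearMap.comp_apply (LinearMap.adjoint P), ← hAw,
    ← LinearMap.comp_apply Awinv, hinv, LinearMap.id_apply]

variable (hQ : ∀ v x, ⟪Aw (Q v), x⟫ = ⟪A v, P x⟫) (hTQ : ∀ v, T v = P (Q v))
include hQ hTQ

theorem galerkin_inner_comm (hA : A.IsSymmetric) (hAw : Aw.IsSymmetric) (u v : 𝒱) :
    ⟪A (T u), v⟫ = ⟪A u, T v⟫ := by
  rw [hTQ, hTQ, hA, real_inner_comm, ← hQ, hAw, real_inner_comm, ← hQ]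

theorem galerkin_inner_self (hsym : ∀ u v, ⟪A (T u), v⟫ = ⟪A u, T v⟫)
    (hidem : ∀ v, T (T v) = T v) (v : 𝒱) : ⟪Aw (Q v), Q v⟫ = ⟪A (T v), T v⟫ := by
  rw [hQ, ← hTQ, hsym, hidem]

end GalerkinProjection

theorem range_conj_eq_range_comp {F H W : Type*} [AddCommGroup F] [Module ℝ F] [AddCommGroup H]
    [Module ℝ H] [AddCommGroup W] [Module ℝ W] (e : F ≃ₗ[ℝ] H) {P : W →ₗ[ℝ] F}
    {Q : F →ₗ[ℝ] W} {T : F →ₗ[ℝ] F} (hTQ : ∀ v, T v = P (Q v)) (hTP : ∀ x, T (P x) = P x) :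
    (e.conj T).range = (e.toLinearMap ∘ₗ P).range := by
  ext u
  constructor
  · rintro ⟨u, rfl⟩
    exact ⟨Q (e.symm u), by simp [LinearEquiv.conj_apply_apply, hTQ]⟩
  · rintro ⟨x, rfl⟩
    exact ⟨e (P x), by simp [LinearEquiv.conj_apply_apply, hTP]⟩

theorem setOf_exists_sum_eq_image {ι : Type*} [Fintype ι] {V : ι → Type*}
    [∀ i, AddCommGroup (V i)] [∀ i, Module ℝ (V i)] {F H : Type*} [AddCommGroup F] [Module ℝ F]
    [AddCommGroup H] [Module ℝ H] (e : F ≃ₗ[ℝ] H) (P : ∀ i, V i →ₗ[ℝ] F) {S : ι → H →ₗ[ℝ] H}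
    (hS : ∀ i, (S i).range = (e.toLinearMap ∘ₗ P i).range) (f : (ι → H) → ℝ) (v : F) :
    {x | ∃ w : ∀ i, V i, ∑ i, P i (w i) = v ∧ x = f (fun i => e (P i (w i)))} =
      f '' {y | (∀ i, y i ∈ (S i).range) ∧ ∑ i, y i = e v} := by
  ext x
  constructor
  · rintro ⟨w, hw, rfl⟩
    exact ⟨_, ⟨fun i => hS i ▸ ⟨w i, rfl⟩, by rw [← hw, map_sum]⟩, rfl⟩
  · rintro ⟨y, ⟨hy, hsum⟩, rfl⟩
    choose w hw using fun i => hS i ▸ hy i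
    have hy' : (fun i => e (P i (w i))) = y := funext hw
    refine ⟨w, e.injective ?_, by rw [hy']⟩
    rw [map_sum, ← hsum, ← hy']

theorem stmt_16_general
    {J : ℕ} {V : Fin J → Type*} [∀ j, NormedAddCommGroup (V j)]
    [∀ j, InnerProductSpace ℝ (V j)] [∀ j, FiniteDimensional ℝ (V j)]
    {𝒱 : Type*} [NormedAddCommGroup 𝒱] [InnerProductSpace ℝ 𝒱] [FiniteDimensional ℝ 𝒱]
    (A : 𝒱 →ₗ[ℝ] 𝒱) (hAsym : A.IsSymmetric) (hApos : ∀ v : 𝒱, v ≠ 0 → 0 < ⟪A v, v⟫)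
    (P : ∀ j : Fin J, V j →ₗ[ℝ] 𝒱)
    (hdecomp : ∀ v : 𝒱, ∃ w : ∀ j, V j, ∑ j : Fin J, P j (w j) = v)
    (Aj : ∀ j : Fin J, V j →ₗ[ℝ] V j)
    (hAj : ∀ j, Aj j = LinearMap.adjoint (P j) ∘ₗ A ∘ₗ P j)
    (hAjsym : ∀ j, (Aj j).IsSymmetric)
    (Ajinv : ∀ j : Fin J, V j →ₗ[ℝ] V j)
    (h2 : ∀ j, Ajinv j ∘ₗ Aj j = LinearMap.id)
    (T : ∀ j : Fin J, 𝒱 →ₗ[ℝ] 𝒱)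
    (hT : ∀ j, T j = P j ∘ₗ Ajinv j ∘ₗ LinearMap.adjoint (P j) ∘ₗ A)
    (PP : ∀ j : Fin J, 𝒱 →ₗ[ℝ] V j)
    (hPP : ∀ j, ∀ v : 𝒱, ∀ vj : V j, ⟪Aj j (PP j v), vj⟫ = ⟪A v, P j vj⟫)
    (Eop : 𝒱 →ₗ[ℝ] 𝒱)
    (hEop : Eop = (List.ofFn fun t : Fin J => (1 : 𝒱 →ₗ[ℝ] 𝒱) - T t.rev).prod)
    (c0 : ℝ)
    (hc0 : c0 = sSup {y : ℝ | ∃ v : 𝒱, Real.sqrt ⟪A v, v⟫ = 1 ∧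
      y = sInf {x : ℝ | ∃ w : ∀ j, V j, (∑ j : Fin J, P j (w j)) = v ∧
        x = ∑ i : Fin J,
          ⟪Aj i (PP i (∑ j ∈ Finset.univ.filter (fun j => i < j), P j (w j))),
            PP i (∑ j ∈ Finset.univ.filter (fun j => i < j), P j (w j))⟫}}) :
    (sSup {y : ℝ | ∃ v : 𝒱, Real.sqrt ⟪A v, v⟫ = 1 ∧
        y = Real.sqrt ⟪A (Eop v), Eop v⟫}) ^ 2 = 1 - 1 / (1 + c0) := by
  have : Fact (A.IsSymmetric ∧ ∀ v, v ≠ 0 → 0 < ⟪A v, v⟫) := ⟨⟨hAsym, hApos⟩⟩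
  set e := EnergySpace.equiv A
  have hTQ j := galerkin_apply_eq (h2 j) (hT j) (hPP j)
  have hTP j := galerkin_apply_map_eq (hAj j) (h2 j) (hT j)
  have hsym j := galerkin_inner_comm (hPP j) (hTQ j) hAsym (hAjsym j)
  have hidem j v : T j (T j v) = T j v := by rw [hTQ j v, hTP]
  have hrange j := range_conj_eq_range_comp e (hTQ j) (hTP j)
  have hspan (u : EnergySpace A) : ∃ y : Fin J → EnergySpace A,
      (∀ j, y j ∈ (e.conj (T j)).range) ∧ ∑ j, y j = u := by
    obtain ⟨w, hw⟩ := hdecomp (e.symm u)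
    exact ⟨fun j => e (P j (w j)), fun j => hrange j ▸ ⟨w j, rfl⟩,
      by rw [← map_sum, hw, e.apply_symm_apply]⟩
  have hcost (w : ∀ j, V j) : ∑ i : Fin J,
      ⟪Aj i (PP i (∑ j ∈ Finset.univ.filter (fun j => i < j), P j (w j))),
        PP i (∑ j ∈ Finset.univ.filter (fun j => i < j), P j (w j))⟫ =
      decompositionCost (fun j => e.conj (T j)) (fun j => e (P j (w j))) := by
    refine sum_congr rfl fun i _ => ?_
    rw [← map_sum, ← filter_lt_eq_Ioi, EnergySpace.conj_apply_equiv, EnergySpace.norm_sq_equiv,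
      galerkin_inner_self (hPP i) (hTQ i) (hsym i) (hidem i)]
  have key := sq_sSup_norm_sscError_eq (fun j => e.conj (T j))
    (fun j => EnergySpace.isSymmetricProjection_conj (hidem j) (hsym j)) hspan
  obtain rfl : Eop = sscError T := hEop
  subst hc0
  simp_rw [hcost]
  rw [EnergySpace.setOf_sqrt_eq_image_sphere (fun u => ‖e.conj (sscError T) u‖) fun v => by
      rw [EnergySpace.conj_apply_equiv, EnergySpace.norm_equiv],
    EnergySpace.setOf_sqrt_eq_image_sphere (infDecompositionCost fun j => e.conj (T j)) fun v =>
      congrArg sInf (setOf_exists_sum_eq_image e P hrange _ v)]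
  simpa only [sscError_conj] using key

theorem stmt_16
    {J : ℕ} {V : Fin J → Type*} [∀ j, NormedAddCommGroup (V j)]
    [∀ j, InnerProductSpace ℝ (V j)] [∀ j, FiniteDimensional ℝ (V j)]
    {𝒱 : Type*} [NormedAddCommGroup 𝒱] [InnerProductSpace ℝ 𝒱] [FiniteDimensional ℝ 𝒱]
    (A : 𝒱 →ₗ[ℝ] 𝒱) (hAsym : A.IsSymmetric) (hApos : ∀ v : 𝒱, v ≠ 0 → 0 < ⟪A v, v⟫)
    (P : ∀ j : Fin J, V j →ₗ[ℝ] 𝒱)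
    (hdecomp : ∀ v : 𝒱, ∃ w : ∀ j, V j, ∑ j : Fin J, P j (w j) = v)
    (Aj : ∀ j : Fin J, V j →ₗ[ℝ] V j)
    (hAj : ∀ j, Aj j = LinearMap.adjoint (P j) ∘ₗ A ∘ₗ P j)
    (hAjsym : ∀ j, (Aj j).IsSymmetric) (hAjpos : ∀ j, ∀ x : V j, x ≠ 0 → 0 < ⟪Aj j x, x⟫)
    (Ajinv : ∀ j : Fin J, V j →ₗ[ℝ] V j)
    (h1 : ∀ j, Aj j ∘ₗ Ajinv j = LinearMap.id) (h2 : ∀ j, Ajinv j ∘ₗ Aj j = LinearMap.id)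
    (T : ∀ j : Fin J, 𝒱 →ₗ[ℝ] 𝒱)
    (hT : ∀ j, T j = P j ∘ₗ Ajinv j ∘ₗ LinearMap.adjoint (P j) ∘ₗ A)
    (PP : ∀ j : Fin J, 𝒱 →ₗ[ℝ] V j)
    (hPP : ∀ j, ∀ v : 𝒱, ∀ vj : V j, ⟪Aj j (PP j v), vj⟫ = ⟪A v, P j vj⟫)
    (Eop : 𝒱 →ₗ[ℝ] 𝒱)
    (hEop : Eop = (List.ofFn fun t : Fin J => (1 : 𝒱 →ₗ[ℝ] 𝒱) - T t.rev).prod)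
    (c0 : ℝ)
    (hc0 : c0 = sSup {y : ℝ | ∃ v : 𝒱, Real.sqrt ⟪A v, v⟫ = 1 ∧
      y = sInf {x : ℝ | ∃ w : ∀ j, V j, (∑ j : Fin J, P j (w j)) = v ∧
        x = ∑ i : Fin J,
          ⟪Aj i (PP i (∑ j ∈ Finset.univ.filter (fun j => i < j), P j (w j))),
            PP i (∑ j ∈ Finset.univ.filter (fun j => i < j), P j (w j))⟫}}) :
    (sSup {y : ℝ | ∃ v : 𝒱, Real.sqrt ⟪A v, v⟫ = 1 ∧
        y = Real.sqrt ⟪A (Eop v), Eop v⟫}) ^ 2 = 1 - 1 / (1 + c0) :=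
  stmt_16_general A hAsym hApos P hdecomp Aj hAj hAjsym Ajinv h2 T hT PP hPP Eop hEop c0 hc0
end

section
/- Let V, W be finite-dimensional real inner product spaces, Π : W → V surjective, A : V → V symmetric positive definite, Ã = Πᵗ A Π, and let W₀ ⊆ W be a subspace containing range(Ã) with orthogonal projection Q̃ : W → W₀. If B̃ : W → W is linear with B̃ = Q̃ᵗ B̃_Q Q̃, where B̃_Q = Q̃ B̃ Q̃ᵗ is symmetric positive definite on W₀, then with B = Π B̃ Πᵗ one has λ_min(BA) = ( sup_{‖v‖_A = 1} inf_{w ∈ W₀, Πw = v} ⟨B̃_Q⁻¹ w, w⟩ )⁻¹ and λ_max(BA) = ( inf_{‖v‖_A = 1} inf_{w ∈ W₀, Πw = v} ⟨B̃_Q⁻¹ w, w⟩ )⁻¹. -/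
open scoped RealInnerProductSpace

set_option linter.unusedSectionVars false
set_option maxHeartbeats 800000

section Core

variable {V : Type*} [NormedAddCommGroup V] [InnerProductSpace ℝ V] [FiniteDimensional ℝ V]

private lemma inner_repr {n : ℕ} (b : OrthonormalBasis (Fin n) ℝ V) (x y : V) :
    ⟪x, y⟫ = ∑ j, b.repr x j * b.repr y j := by
  rw [← b.repr.inner_map_map x y]
  simp only [PiLp.inner_apply, RCLike.inner_apply, conj_trivial]
  exact Finset.sum_congr rfl fun j _ => mul_comm _ _

private theorem core (A B C : V →ₗ[ℝ] V)
    (hAsym : A.IsSymmetric) (hApos : ∀ v : V, v ≠ 0 → 0 < ⟪A v, v⟫)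
    (hBsym : B.IsSymmetric) (hBpos : ∀ v : V, v ≠ 0 → 0 < ⟪B v, v⟫)
    (hBC : ∀ v, B (C v) = v) (hCB : ∀ v, C (B v) = v) :
    sInf {μ : ℝ | Module.End.HasEigenvalue (B ∘ₗ A) μ}
        = (sSup {x : ℝ | ∃ v : V, Real.sqrt ⟪A v, v⟫ = 1 ∧ x = ⟪C v, v⟫})⁻¹ ∧
    sSup {μ : ℝ | Module.End.HasEigenvalue (B ∘ₗ A) μ}
        = (sInf {x : ℝ | ∃ v : V, Real.sqrt ⟪A v, v⟫ = 1 ∧ x = ⟪C v, v⟫})⁻¹ := by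
  rcases Nat.eq_zero_or_pos (Module.finrank ℝ V) with h0 | hpos
  · haveI : Subsingleton V := Module.finrank_zero_iff.mp h0
    have hE : {μ : ℝ | Module.End.HasEigenvalue (B ∘ₗ A) μ} = (∅ : Set ℝ) := by
      ext μ
      simp only [Set.mem_setOf_eq, Set.mem_empty_iff_false, iff_false]
      intro h
      obtain ⟨v, hv⟩ := h.exists_hasEigenvector
      exact hv.2 (Subsingleton.elim v 0)
    have hT : {x : ℝ | ∃ v : V, Real.sqrt ⟪A v, v⟫ = 1 ∧ x = ⟪C v, v⟫} = (∅ : Set ℝ) := by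
      ext x
      simp only [Set.mem_setOf_eq, Set.mem_empty_iff_false, iff_false]
      rintro ⟨v, hv1, -⟩
      rw [Subsingleton.elim v 0] at hv1
      simp at hv1
    rw [hE, hT, Real.sInf_empty, Real.sSup_empty, inv_zero]
    exact ⟨rfl, rfl⟩
  · set n := Module.finrank ℝ V with hnn
    have hn : Module.finrank ℝ V = n := rfl
    haveI : Nonempty (Fin n) := Fin.pos_iff_nonempty.mp hpos
    -- eigenbasis of B and positivity of its eigenvalues
    set b := hBsym.eigenvectorBasis hn with hb
    set β := hBsym.eigenvalues hn with hβ
    have hβpos : ∀ i, 0 < β i := by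
      intro i
      have hne : b i ≠ 0 := b.orthonormal.ne_zero i
      have h1 := hBpos (b i) hne
      rw [hBsym.apply_eigenvectorBasis hn i] at h1
      rw [real_inner_smul_left, real_inner_self_eq_norm_sq, b.orthonormal.1 i] at h1
      simpa using h1
    -- the square root S of B
    set S : V →ₗ[ℝ] V := b.toBasis.constr ℝ (fun i => Real.sqrt (β i) • b i) with hS
    have hSb : ∀ i, S (b i) = Real.sqrt (β i) • b i := by
      intro i
      rw [hS]
      simpa using b.toBasis.constr_basis ℝ (fun i => Real.sqrt (β i) • b i) i
    have hSrepr : ∀ (u : V) (j : Fin n), b.repr (S u) j = Real.sqrt (β j) * b.repr u j := by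
      intro u j
      have hSu : S u = ∑ i, (b.repr u i * Real.sqrt (β i)) • b i := by
        conv_lhs => rw [← b.sum_repr u]
        rw [map_sum]
        simp_rw [map_smul, hSb, smul_smul]
      rw [b.repr_apply_apply, hSu, b.orthonormal.inner_right_fintype, mul_comm]
    have hSsym : S.IsSymmetric := by
      intro x y
      rw [inner_repr b (S x) y, inner_repr b x (S y)]
      refine Finset.sum_congr rfl fun j _ => ?_
      rw [hSrepr, hSrepr]; ring
    have hSS : ∀ u, S (S u) = B u := by
      intro u
      apply b.repr.injective
      ext j
      rw [hSrepr, hSrepr, hBsym.eigenvectorBasis_apply_self_apply hn u j,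
        ← mul_assoc, Real.mul_self_sqrt (hβpos j).le]
      simp only [RCLike.ofReal_real_eq_id, id_eq]
      rfl
    have hSinj : Function.Injective S := by
      intro x y hxy
      apply b.repr.injective
      ext j
      have h := congrArg (fun z => b.repr z j) hxy
      simp only [hSrepr] at h
      exact mul_left_cancel₀ (ne_of_gt (Real.sqrt_pos.mpr (hβpos j))) h
    have hSsurj : Function.Surjective S := LinearMap.injective_iff_surjective.mp hSinj
    have hSCS : ∀ u, S (C (S u)) = u := by
      intro u
      apply hSinj
      rw [hSS, hBC]
    -- M = S A S
    set M : V →ₗ[ℝ] V := S ∘ₗ A ∘ₗ S with hM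
    have hMapp : ∀ u, M u = S (A (S u)) := fun u => rfl
    have hMsym : M.IsSymmetric := by
      intro x y
      rw [hMapp, hMapp, hSsym (A (S x)) y, hAsym (S x) (S y), hSsym x (A (S y))]
    have hASM : ∀ w, ⟪A (S w), S w⟫ = ⟪M w, w⟫ := by
      intro w
      rw [hMapp, hSsym (A (S w)) w]
    have hMpos : ∀ u : V, u ≠ 0 → 0 < ⟪M u, u⟫ := by
      intro u hu
      have hSu : S u ≠ 0 := fun h => hu (hSinj (h.trans (map_zero S).symm))
      rw [← hASM u]
      exact hApos (S u) hSu
    -- eigenvalues of B∘A and of M coincide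
    have hEig : {μ : ℝ | Module.End.HasEigenvalue (B ∘ₗ A) μ}
        = {μ : ℝ | Module.End.HasEigenvalue M μ} := by
      ext μ
      simp only [Set.mem_setOf_eq]
      constructor
      · intro h
        obtain ⟨v, hv⟩ := h.exists_hasEigenvector
        have hveq : (B ∘ₗ A) v = μ • v := Module.End.mem_eigenspace_iff.mp hv.1
        obtain ⟨u, rfl⟩ := hSsurj v
        have hu0 : u ≠ 0 := fun h' => hv.2 (by rw [h', map_zero])
        have hMu : M u = μ • u := by
          apply hSinj
          show S (M u) = S (μ • u)
          calc S (M u) = S (S (A (S u))) := by rw [hMapp]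
            _ = B (A (S u)) := hSS _
            _ = (B ∘ₗ A) (S u) := rfl
            _ = μ • S u := hveq
            _ = S (μ • u) := (map_smul S μ u).symm
        exact Module.End.hasEigenvalue_of_hasEigenvector
          ⟨Module.End.mem_eigenspace_iff.mpr hMu, hu0⟩
      · intro h
        obtain ⟨u, hu⟩ := h.exists_hasEigenvector
        have hueq : M u = μ • u := Module.End.mem_eigenspace_iff.mp hu.1
        have hSu0 : S u ≠ 0 := fun h' => hu.2 (hSinj (h'.trans (map_zero S).symm))
        have hBA : (B ∘ₗ A) (S u) = μ • S u := by
          calc (B ∘ₗ A) (S u) = B (A (S u)) := rfl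
            _ = S (S (A (S u))) := (hSS _).symm
            _ = S (M u) := by rw [hMapp]
            _ = S (μ • u) := by rw [hueq]
            _ = μ • S u := map_smul S μ u
        exact Module.End.hasEigenvalue_of_hasEigenvector
          ⟨Module.End.mem_eigenspace_iff.mpr hBA, hSu0⟩
    -- eigenbasis of M
    set c := hMsym.eigenvectorBasis hn with hc
    set ν := hMsym.eigenvalues hn with hν
    have hcc : ∀ i, ⟪c i, c i⟫ = (1 : ℝ) := by
      intro i
      rw [real_inner_self_eq_norm_sq, c.orthonormal.1 i]
      norm_num
    have hνpos : ∀ i, 0 < ν i := by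
      intro i
      have hne : c i ≠ 0 := c.orthonormal.ne_zero i
      have h1 := hMpos (c i) hne
      rw [hMsym.apply_eigenvectorBasis hn i] at h1
      rw [real_inner_smul_left, hcc i] at h1
      simpa using h1
    obtain ⟨i₀, hi₀⟩ := Finite.exists_min ν
    obtain ⟨i₁, hi₁⟩ := Finite.exists_max ν
    have hMub : ∀ u : V, ν i₀ * ⟪u, u⟫ ≤ ⟪M u, u⟫ ∧ ⟪M u, u⟫ ≤ ν i₁ * ⟪u, u⟫ := by
      intro u
      have h1 : ⟪M u, u⟫ = ∑ j, ν j * (c.repr u j) ^ 2 := by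
        rw [inner_repr c (M u) u]
        refine Finset.sum_congr rfl fun j _ => ?_
        rw [hMsym.eigenvectorBasis_apply_self_apply hn u j]
        simp only [RCLike.ofReal_real_eq_id, id_eq]
        ring
      have h2 : ⟪u, u⟫ = ∑ j, (c.repr u j) ^ 2 := by
        rw [inner_repr c u u]
        exact Finset.sum_congr rfl fun j _ => by ring
      rw [h1, h2, Finset.mul_sum, Finset.mul_sum]
      exact ⟨Finset.sum_le_sum fun j _ => mul_le_mul_of_nonneg_right (hi₀ j) (sq_nonneg _),
        Finset.sum_le_sum fun j _ => mul_le_mul_of_nonneg_right (hi₁ j) (sq_nonneg _)⟩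
    have hLeast : IsLeast {μ : ℝ | Module.End.HasEigenvalue M μ} (ν i₀) := by
      constructor
      · exact hMsym.hasEigenvalue_eigenvalues hn i₀
      · rintro μ h
        obtain ⟨v, hv⟩ := h.exists_hasEigenvector
        have hveq : M v = μ • v := Module.End.mem_eigenspace_iff.mp hv.1
        have hvv : 0 < ⟪v, v⟫ := by
          rw [real_inner_self_eq_norm_sq]
          exact pow_pos (norm_pos_iff.mpr hv.2) 2
        have h1 := (hMub v).1
        rw [hveq, real_inner_smul_left] at h1
        exact le_of_mul_le_mul_right h1 hvv
    have hGreatest : IsGreatest {μ : ℝ | Module.End.HasEigenvalue M μ} (ν i₁) := by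
      constructor
      · exact hMsym.hasEigenvalue_eigenvalues hn i₁
      · rintro μ h
        obtain ⟨v, hv⟩ := h.exists_hasEigenvector
        have hveq : M v = μ • v := Module.End.mem_eigenspace_iff.mp hv.1
        have hvv : 0 < ⟪v, v⟫ := by
          rw [real_inner_self_eq_norm_sq]
          exact pow_pos (norm_pos_iff.mpr hv.2) 2
        have h1 := (hMub v).2
        rw [hveq, real_inner_smul_left] at h1
        exact le_of_mul_le_mul_right h1 hvv
    -- the Rayleigh-type set
    have hCS : ∀ w, ⟪C (S w), S w⟫ = ⟪w, w⟫ := by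
      intro w
      rw [← hSsym (C (S w)) w, hSCS w]
    have hmem : ∀ i : Fin n,
        (ν i)⁻¹ ∈ {x : ℝ | ∃ v : V, Real.sqrt ⟪A v, v⟫ = 1 ∧ x = ⟪C v, v⟫} := by
      intro i
      set t : ℝ := (Real.sqrt (ν i))⁻¹ with ht
      have htt : t * t = (ν i)⁻¹ := by
        rw [ht, ← mul_inv, Real.mul_self_sqrt (hνpos i).le]
      have hw : ⟪(t • c i : V), (t • c i : V)⟫ = (ν i)⁻¹ := by
        rw [real_inner_smul_left, real_inner_smul_right, hcc i]
        rw [mul_one, htt]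
      refine ⟨S (t • c i), ?_, ?_⟩
      · rw [hASM]
        have : ⟪M (t • c i), (t • c i : V)⟫ = (1 : ℝ) := by
          rw [map_smul, real_inner_smul_left, real_inner_smul_right,
            hMsym.apply_eigenvectorBasis hn i]
          rw [real_inner_smul_left, hcc i, mul_one]
          rw [← mul_assoc, htt]
          exact inv_mul_cancel₀ (ne_of_gt (hνpos i))
        rw [this, Real.sqrt_one]
      · rw [hCS, hw]
    have hubT : ∀ x ∈ {x : ℝ | ∃ v : V, Real.sqrt ⟪A v, v⟫ = 1 ∧ x = ⟪C v, v⟫},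
        x ≤ (ν i₀)⁻¹ := by
      rintro x ⟨v, hv1, rfl⟩
      obtain ⟨u, rfl⟩ := hSsurj v
      have h1 : ⟪M u, u⟫ = 1 := by rw [← hASM]; exact Real.sqrt_eq_one.mp hv1
      have h2 : ν i₀ * ⟪u, u⟫ ≤ 1 := h1 ▸ (hMub u).1
      rw [hCS]
      calc ⟪u, u⟫ = (ν i₀)⁻¹ * (ν i₀ * ⟪u, u⟫) := by
            rw [← mul_assoc, inv_mul_cancel₀ (ne_of_gt (hνpos i₀)), one_mul]
        _ ≤ (ν i₀)⁻¹ * 1 := mul_le_mul_of_nonneg_left h2 (inv_nonneg.mpr (hνpos i₀).le)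
        _ = (ν i₀)⁻¹ := mul_one _
    have hlbT : ∀ x ∈ {x : ℝ | ∃ v : V, Real.sqrt ⟪A v, v⟫ = 1 ∧ x = ⟪C v, v⟫},
        (ν i₁)⁻¹ ≤ x := by
      rintro x ⟨v, hv1, rfl⟩
      obtain ⟨u, rfl⟩ := hSsurj v
      have h1 : ⟪M u, u⟫ = 1 := by rw [← hASM]; exact Real.sqrt_eq_one.mp hv1
      have h2 : 1 ≤ ν i₁ * ⟪u, u⟫ := h1 ▸ (hMub u).2
      rw [hCS]
      calc (ν i₁)⁻¹ = (ν i₁)⁻¹ * 1 := (mul_one _).symm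
        _ ≤ (ν i₁)⁻¹ * (ν i₁ * ⟪u, u⟫) :=
            mul_le_mul_of_nonneg_left h2 (inv_nonneg.mpr (hνpos i₁).le)
        _ = ⟪u, u⟫ := by rw [← mul_assoc, inv_mul_cancel₀ (ne_of_gt (hνpos i₁)), one_mul]
    have hGT : IsGreatest {x : ℝ | ∃ v : V, Real.sqrt ⟪A v, v⟫ = 1 ∧ x = ⟪C v, v⟫}
        ((ν i₀)⁻¹) := ⟨hmem i₀, hubT⟩
    have hLT : IsLeast {x : ℝ | ∃ v : V, Real.sqrt ⟪A v, v⟫ = 1 ∧ x = ⟪C v, v⟫}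
        ((ν i₁)⁻¹) := ⟨hmem i₁, hlbT⟩
    rw [hEig, hLeast.csInf_eq, hGreatest.csSup_eq, hGT.csSup_eq, hLT.csInf_eq, inv_inv, inv_inv]
    exact ⟨rfl, rfl⟩

end Core

theorem stmt_17
    {V W : Type*} [NormedAddCommGroup V] [InnerProductSpace ℝ V] [FiniteDimensional ℝ V]
    [NormedAddCommGroup W] [InnerProductSpace ℝ W] [FiniteDimensional ℝ W]
    (P : W →ₗ[ℝ] V) (hP : Function.Surjective P)
    (A : V →ₗ[ℝ] V) (hAsym : A.IsSymmetric) (hApos : ∀ v : V, v ≠ 0 → 0 < ⟪A v, v⟫)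
    (At : W →ₗ[ℝ] W) (hAt : At = LinearMap.adjoint P ∘ₗ A ∘ₗ P)
    (W₀ : Submodule ℝ W) (hW₀ : LinearMap.range At ≤ W₀)
    (BQ : W₀ →ₗ[ℝ] W₀) (hBQsym : BQ.IsSymmetric) (hBQpos : ∀ x : W₀, x ≠ 0 → 0 < ⟪BQ x, x⟫)
    (BQinv : W₀ →ₗ[ℝ] W₀)
    (h1 : BQ ∘ₗ BQinv = LinearMap.id) (h2 : BQinv ∘ₗ BQ = LinearMap.id)
    (Bt : W →ₗ[ℝ] W)
    (hBt : Bt = W₀.subtype ∘ₗ BQ ∘ₗ (W₀.orthogonalProjection).toLinearMap)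
    (B : V →ₗ[ℝ] V) (hB : B = P ∘ₗ Bt ∘ₗ LinearMap.adjoint P) :
    sInf {μ : ℝ | Module.End.HasEigenvalue (B ∘ₗ A) μ} =
      (sSup {x : ℝ | ∃ v : V, Real.sqrt ⟪A v, v⟫ = 1 ∧
          x = sInf {z : ℝ | ∃ w : W₀, P (w : W) = v ∧ z = ⟪BQinv w, w⟫}})⁻¹ ∧
    sSup {μ : ℝ | Module.End.HasEigenvalue (B ∘ₗ A) μ} =
      (sInf {x : ℝ | ∃ v : V, Real.sqrt ⟪A v, v⟫ = 1 ∧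
          x = sInf {z : ℝ | ∃ w : W₀, P (w : W) = v ∧ z = ⟪BQinv w, w⟫}})⁻¹ := by
  have hbq1 : ∀ x : W₀, BQ (BQinv x) = x := fun x => by
    rw [← LinearMap.comp_apply, h1, LinearMap.id_apply]
  have hbq2 : ∀ x : W₀, BQinv (BQ x) = x := fun x => by
    rw [← LinearMap.comp_apply, h2, LinearMap.id_apply]
  -- A is bijective
  have hAinj : Function.Injective A := by
    refine (injective_iff_map_eq_zero A).mpr fun v hv => ?_
    by_contra h0
    have := hApos v h0
    rw [hv, inner_zero_left] at this
    exact lt_irrefl 0 this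
  have hAsurj : Function.Surjective A := LinearMap.injective_iff_surjective.mp hAinj
  -- adjoint P is injective (as a zero-kernel statement)
  have hPt0 : ∀ v : V, LinearMap.adjoint P v = 0 → v = 0 := by
    intro v hv
    obtain ⟨w, hw⟩ := hP v
    have h : ⟪v, v⟫ = 0 := by
      nth_rewrite 2 [← hw]
      rw [← LinearMap.adjoint_inner_left P w v, hv, inner_zero_left]
    exact inner_self_eq_zero.mp h
  -- range of adjoint P lies in W₀
  have hPtW₀ : ∀ v : V, LinearMap.adjoint P v ∈ W₀ := by
    intro v
    obtain ⟨x, hx⟩ := hAsurj v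
    obtain ⟨w, hw⟩ := hP x
    refine hW₀ ⟨w, ?_⟩
    rw [hAt]
    simp only [LinearMap.coe_comp, Function.comp_apply]
    rw [hw, hx]
  -- P ∘ adjoint P is bijective
  have hPPtinj : Function.Injective (P ∘ₗ LinearMap.adjoint P) := by
    refine (injective_iff_map_eq_zero _).mpr fun v hv => ?_
    refine hPt0 v ?_
    have h : ⟪LinearMap.adjoint P v, LinearMap.adjoint P v⟫ = (0 : ℝ) := by
      rw [LinearMap.adjoint_inner_left]
      have hv' : P (LinearMap.adjoint P v) = 0 := hv
      rw [hv', inner_zero_right]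
    exact inner_self_eq_zero.mp h
  have hPPtsurj : Function.Surjective (P ∘ₗ LinearMap.adjoint P) :=
    LinearMap.injective_iff_surjective.mp hPPtinj
  -- Pi0
  set Pi0 : W₀ →ₗ[ℝ] V := P ∘ₗ W₀.subtype with hPi0def
  have hPi0surj : Function.Surjective Pi0 := by
    intro v
    obtain ⟨u, hu⟩ := hPPtsurj v
    exact ⟨⟨LinearMap.adjoint P u, hPtW₀ u⟩, hu⟩
  have hadj : LinearMap.adjoint Pi0
      = (W₀.orthogonalProjection).toLinearMap ∘ₗ LinearMap.adjoint P := by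
    symm
    rw [LinearMap.eq_adjoint_iff]
    intro x y
    simp only [LinearMap.coe_comp, Function.comp_apply, ContinuousLinearMap.coe_coe]
    rw [W₀.inner_orthogonalProjection_eq_of_mem_right y (LinearMap.adjoint P x),
      LinearMap.adjoint_inner_left]
    rfl
  have hBapp : ∀ v, B v = Pi0 (BQ (LinearMap.adjoint Pi0 v)) := by
    intro v
    rw [hB, hBt, hadj]
    rfl
  have hPi0t0 : ∀ v : V, LinearMap.adjoint Pi0 v = 0 → v = 0 := by
    intro v hv
    obtain ⟨w, hw⟩ := hPi0surj v
    have h : ⟪v, v⟫ = 0 := by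
      nth_rewrite 2 [← hw]
      rw [← LinearMap.adjoint_inner_left Pi0 w v, hv, inner_zero_left]
    exact inner_self_eq_zero.mp h
  -- B is symmetric positive definite
  have hBsym : B.IsSymmetric := by
    intro x y
    rw [hBapp, hBapp]
    calc ⟪Pi0 (BQ (LinearMap.adjoint Pi0 x)), y⟫
        = ⟪BQ (LinearMap.adjoint Pi0 x), LinearMap.adjoint Pi0 y⟫ :=
          (LinearMap.adjoint_inner_right Pi0 _ _).symm
      _ = ⟪LinearMap.adjoint Pi0 x, BQ (LinearMap.adjoint Pi0 y)⟫ := hBQsym _ _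
      _ = ⟪x, Pi0 (BQ (LinearMap.adjoint Pi0 y))⟫ := LinearMap.adjoint_inner_left Pi0 _ _
  have hBpos : ∀ v : V, v ≠ 0 → 0 < ⟪B v, v⟫ := by
    intro v hv
    have h0 : LinearMap.adjoint Pi0 v ≠ 0 := fun h => hv (hPi0t0 v h)
    rw [hBapp, ← LinearMap.adjoint_inner_right Pi0]
    exact hBQpos _ h0
  -- the inverse C of B
  have hBinj : Function.Injective B := by
    refine (injective_iff_map_eq_zero B).mpr fun v hv => ?_
    by_contra h0
    have := hBpos v h0
    rw [hv, inner_zero_left] at this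
    exact lt_irrefl 0 this
  have hBbij : Function.Bijective B := ⟨hBinj, LinearMap.injective_iff_surjective.mp hBinj⟩
  set C : V →ₗ[ℝ] V := (LinearEquiv.ofBijective B hBbij).symm.toLinearMap with hC
  have hBC : ∀ v, B (C v) = v := fun v => (LinearEquiv.ofBijective B hBbij).apply_symm_apply v
  have hCB : ∀ v, C (B v) = v := fun v => (LinearEquiv.ofBijective B hBbij).symm_apply_apply v
  -- BQinv is symmetric and positive semidefinite
  have hBQinvsym : ∀ x y : W₀, ⟪BQinv x, y⟫ = ⟪x, BQinv y⟫ := by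
    intro x y
    calc ⟪BQinv x, y⟫ = ⟪BQinv x, BQ (BQinv y)⟫ := by rw [hbq1]
      _ = ⟪BQ (BQinv x), BQinv y⟫ := (hBQsym (BQinv x) (BQinv y)).symm
      _ = ⟪x, BQinv y⟫ := by rw [hbq1]
  have hBQinvnn : ∀ x : W₀, 0 ≤ ⟪BQinv x, x⟫ := by
    intro x
    rcases eq_or_ne (BQinv x) 0 with h | h
    · rw [h, inner_zero_left]
    · calc (0 : ℝ) ≤ ⟪BQ (BQinv x), BQinv x⟫ := (hBQpos (BQinv x) h).le
        _ = ⟪BQinv x, BQ (BQinv x)⟫ := real_inner_comm _ _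
        _ = ⟪BQinv x, x⟫ := by rw [hbq1]
  -- the inner infimum is ⟪C v, v⟫
  have hset : ∀ v : V,
      sInf {z : ℝ | ∃ w : W₀, P (w : W) = v ∧ z = ⟪BQinv w, w⟫} = ⟪C v, v⟫ := by
    intro v
    set w₀ : W₀ := BQ (LinearMap.adjoint Pi0 (C v)) with hw₀
    have hPw₀ : P (w₀ : W) = v := by
      show Pi0 w₀ = v
      rw [← hBapp (C v), hBC]
    have hval : ⟪BQinv w₀, w₀⟫ = ⟪C v, v⟫ := by
      rw [hw₀, hbq2, LinearMap.adjoint_inner_left, ← hBapp (C v), hBC]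
    apply IsLeast.csInf_eq
    constructor
    · exact ⟨w₀, hPw₀, hval.symm⟩
    · rintro z ⟨w, hw, rfl⟩
      have hd : Pi0 (w - w₀) = 0 := by
        rw [map_sub, show Pi0 w = v from hw, show Pi0 w₀ = v from hPw₀, sub_self]
      have hcross : ⟪BQinv w₀, w - w₀⟫ = 0 := by
        rw [hw₀, hbq2, LinearMap.adjoint_inner_left, hd, inner_zero_right]
      have e1 : ⟪BQinv (w - w₀), w₀⟫ = ⟪BQinv w₀, w - w₀⟫ := by
        rw [hBQinvsym]
        exact real_inner_comm _ _
      have expand : ⟪BQinv w, w⟫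
          = ⟪C v, v⟫ + 2 * ⟪BQinv w₀, w - w₀⟫ + ⟪BQinv (w - w₀), w - w₀⟫ := by
        have hw' : w = w₀ + (w - w₀) := by abel
        calc ⟪BQinv w, w⟫ = ⟪BQinv (w₀ + (w - w₀)), w₀ + (w - w₀)⟫ := by rw [← hw']
          _ = ⟪C v, v⟫ + 2 * ⟪BQinv w₀, w - w₀⟫ + ⟪BQinv (w - w₀), w - w₀⟫ := by
            rw [map_add, inner_add_left, inner_add_right, inner_add_right, hval, e1]
            ring
      rw [expand, hcross]
      have := hBQinvnn (w - w₀)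
      linarith
  simp only [hset]
  exact core A B C hAsym hApos hBsym hBpos hBC hCB
end

section
/- Let V, W be finite-dimensional real inner product spaces, Π : W → V surjective, A : V → V symmetric positive definite, Ã = Πᵗ A Π, f ∈ V, f̃ = Πᵗ f, and B̃ : W → W linear with B = Π B̃ Πᵗ. Given any sequence {u^m} in V generated by u^{m+1} = u^m + B(f − Au^m), there exists a sequence {w^m} in W with w^{m+1} = w^m + B̃(f̃ − Ã w^m) and Π w^m = u^m for all m ≥ 0. -/
open scoped RealInnerProductSpace

theorem stmt_19
    {V W : Type*} [NormedAddCommGroup V] [InnerProductSpace ℝ V] [FiniteDimensional ℝ V]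
    [NormedAddCommGroup W] [InnerProductSpace ℝ W] [FiniteDimensional ℝ W]
    (P : W →ₗ[ℝ] V) (hP : Function.Surjective P)
    (A : V →ₗ[ℝ] V) (hAsym : A.IsSymmetric) (hApos : ∀ v : V, v ≠ 0 → 0 < ⟪A v, v⟫)
    (At : W →ₗ[ℝ] W) (hAt : At = LinearMap.adjoint P ∘ₗ A ∘ₗ P)
    (f : V)
    (Bt : W →ₗ[ℝ] W) (B : V →ₗ[ℝ] V) (hB : B = P ∘ₗ Bt ∘ₗ LinearMap.adjoint P)
    (u : ℕ → V) (hu : ∀ m : ℕ, u (m + 1) = u m + B (f - A (u m))) :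
    ∃ w : ℕ → W,
      (∀ m : ℕ, w (m + 1) = w m + Bt (LinearMap.adjoint P f - At (w m))) ∧
      ∀ m : ℕ, P (w m) = u m := by
  obtain ⟨w0, hw0⟩ := hP (u 0)
  let w : ℕ → W := fun m => Nat.rec w0
    (fun _ wm => wm + Bt (LinearMap.adjoint P f - At wm)) m
  refine ⟨w, fun m => rfl, ?_⟩
  intro m
  induction m with
  | zero => exact hw0
  | succ m ih =>
    have : w (m + 1) = w m + Bt (LinearMap.adjoint P f - At (w m)) := rfl
    rw [this, map_add, ih, hu m, hB, hAt]
    simp [ih]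
end
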